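/- arXiv:2008.01495 — 12 statements merged into one kernel-verified Lean document; each statement's English description precedes it below -/
import Mathlib

section
/- With L = |W|, for every subset W̄ ⊆ W it holds that rank(T_{W̄, X}) = rank(F(W̄, X)) + |W̄| − L, where T_{W̄, X} is the submatrix of T = (I − G)⁻¹ · X̄ with rows indexed by W̄ and all columns, and F(W̄, X) = [ (G − I) restricted to the columns indexed by W ∖ W̄ , X̄ ]. -/
/-!
Left multiplication by the invertible matrix `-(I - G)⁻¹` turns `F(W̄, X)` into `[E, -T]`, where
the columns of `E` are the standard basis vectors indexed by `W ∖ W̄`. These span exactly the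
kernel of the restriction `F^W → F^W̄`, and rank–nullity for that restriction on the column space
of `[E, -T]` gives `rank [E, -T] = |W ∖ W̄| + rank T_{W̄, X}`.
-/

open Matrix Module

theorem LinearMap.finrank_ker_sup {K V V₂ : Type*} [DivisionRing K] [AddCommGroup V]
    [Module K V] [FiniteDimensional K V] [AddCommGroup V₂] [Module K V₂]
    (f : V →ₗ[K] V₂) (U : Submodule K V) :
    finrank K ↥(ker f ⊔ U) = finrank K (ker f) + finrank K (U.map f) := by
  have hker : ker (f.domRestrict (ker f ⊔ U)) = (ker f).comap (ker f ⊔ U).subtype :=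
    ker_domRestrict _ _
  have hrange : range (f.domRestrict (ker f ⊔ U)) = U.map f := by
    rw [range_domRestrict, Submodule.map_sup, le_ker_iff_map.mp le_rfl, bot_sup_eq]
  rw [← (f.domRestrict _).finrank_range_add_finrank_ker, hrange, hker,
    (Submodule.comapSubtypeEquivOfLe le_sup_left).finrank_eq, add_comm]

namespace Matrix

variable {R m n : Type*}

theorem range_mulVecLin_fromCols [CommSemiring R] {n₁ n₂ : Type*} [Fintype n₁] [Fintype n₂]
    (P : Matrix m n₁ R) (Q : Matrix m n₂ R) :
    LinearMap.range (fromCols P Q).mulVecLin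
      = LinearMap.range P.mulVecLin ⊔ LinearMap.range Q.mulVecLin := by
  rw [range_mulVecLin, range_mulVecLin, range_mulVecLin, ← Submodule.span_union,
    ← Set.Sum.elim_range]
  congr 2
  ext (j | j) <;> rfl

theorem rank_neg [CommRing R] [Fintype n] (M : Matrix m n R) : (-M).rank = M.rank := by
  rw [← neg_one_smul R M, rank_smul_of_mem_nonZeroDivisors]
  exact isUnit_one.neg.mem_nonZeroDivisors

section

variable [DecidableEq m]

theorem one_submatrix_mulVec_apply [NonAssocSemiring R] (s : Finset m) (w : ↥s → R) (i : m) :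
    ((1 : Matrix m m R).submatrix id (fun j : ↥s => (j : m)) *ᵥ w) i
      = if h : i ∈ s then w ⟨i, h⟩ else 0 := by
  simp only [mulVec, dotProduct, submatrix_apply, id, one_apply, ite_mul, one_mul, zero_mul]
  split_ifs with h
  · rw [Fintype.sum_eq_single ⟨i, h⟩ fun j hj => if_neg fun hij => hj (Subtype.ext hij.symm),
      if_pos rfl]
  · exact Finset.sum_eq_zero fun j _ => if_neg fun hij => h (by rw [hij]; exact j.2)

theorem rank_one_submatrix_coe [CommSemiring R] [StrongRankCondition R] (s : Finset m) :
    ((1 : Matrix m m R).submatrix id (fun j : ↥s => (j : m))).rank = s.card := by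
  have hinj :
      Function.Injective ((1 : Matrix m m R).submatrix id (fun j : ↥s => (j : m))).mulVecLin := by
    intro w w' hww'
    funext j
    simpa [one_submatrix_mulVec_apply] using congrFun hww' j
  rw [rank, LinearMap.finrank_range_of_inj hinj, finrank_fintype_fun_eq_card, Fintype.card_coe]

variable [Fintype m]

theorem ker_funLeft_eq_range_one_submatrix_compl [CommSemiring R] (s : Finset m) :
    LinearMap.ker (LinearMap.funLeft R R (fun i : ↥s => (i : m)))
      = LinearMap.range ((1 : Matrix m m R).submatrix id (fun j : ↥sᶜ => (j : m))).mulVecLin := by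
  ext v
  simp only [LinearMap.mem_ker, LinearMap.mem_range, mulVecLin_apply]
  constructor
  · intro hv
    refine ⟨fun j => v j, funext fun i => ?_⟩
    rw [one_submatrix_mulVec_apply]
    split_ifs with h
    · rfl
    · exact (congrFun hv ⟨i, by simpa using h⟩).symm
  · rintro ⟨w, rfl⟩
    funext i
    exact (one_submatrix_mulVec_apply _ w i).trans (dif_neg (by simp))

theorem rank_fromCols_one_submatrix_compl [Field R] [Fintype n] (M : Matrix m n R)
    (s : Finset m) :
    (fromCols ((1 : Matrix m m R).submatrix id (fun j : ↥sᶜ => (j : m))) M).rank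
      = sᶜ.card + (M.submatrix (fun i : ↥s => (i : m)) id).rank := by
  have hrestrict : LinearMap.range (M.submatrix (fun i : ↥s => (i : m)) id).mulVecLin
      = (LinearMap.range M.mulVecLin).map (LinearMap.funLeft R R (fun i : ↥s => (i : m))) := by
    rw [← LinearMap.range_comp, ← Equiv.coe_refl, mulVecLin_submatrix]
    rfl
  rw [rank, range_mulVecLin_fromCols, ← ker_funLeft_eq_range_one_submatrix_compl,
    LinearMap.finrank_ker_sup, ker_funLeft_eq_range_one_submatrix_compl, ← rank,
    rank_one_submatrix_coe, rank, hrestrict]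

end

end Matrix

theorem stmt1_general {F : Type*} [Field F] {W X : Type*} [Fintype W] [Fintype X]
    [DecidableEq W]
    (G : Matrix W W F) (Xb : Matrix W X F)
    (hG : IsUnit (1 - G))
    (Wb : Finset W) :
    ((((1 - G)⁻¹ * Xb).submatrix (fun i : ↥Wb => (i : W)) id).rank : ℤ)
      = ((Matrix.fromCols
            ((G - 1).submatrix id (fun j : ↥(Wbᶜ) => (j : W))) Xb).rank : ℤ)
        + (Wb.card : ℤ) - (Fintype.card W : ℤ) := by
  have hdet : IsUnit (1 - G).det := (Matrix.isUnit_iff_isUnit_det _).mp hG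
  have hN : IsUnit (-(1 - G)⁻¹).det := by
    rw [det_neg]
    exact (isUnit_one.neg.pow _).mul (isUnit_nonsing_inv_det _ hdet)
  have hNG : -(1 - G)⁻¹ * (G - 1) = 1 := by
    rw [neg_mul, ← mul_neg, neg_sub, nonsing_inv_mul _ hdet]
  have hcols : -(1 - G)⁻¹ * fromCols ((G - 1).submatrix id (fun j : ↥(Wbᶜ) => (j : W))) Xb
      = fromCols ((1 : Matrix W W F).submatrix id (fun j : ↥Wbᶜ => (j : W)))
          (-((1 - G)⁻¹ * Xb)) := by
    rw [mul_fromCols]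
    congr 1
    · rw [← submatrix_id_id (-(1 - G)⁻¹), ← submatrix_mul _ _ _ _ _ Function.bijective_id, hNG]
    · exact Matrix.neg_mul _ _
  rw [← rank_mul_eq_right_of_isUnit_det _ _ hN, hcols, rank_fromCols_one_submatrix_compl,
    submatrix_neg, Pi.neg_apply, Pi.neg_apply, rank_neg]
  have := Finset.card_add_card_compl Wb
  omega

/-- With `T = (I - G)⁻¹ * X̄`, for every subset `W̄ ⊆ W` one has
`rank T_{W̄,X} = rank F(W̄,X) + |W̄| - L`, where
`F(W̄,X) = [(G - I)_{·, W∖W̄} , X̄]` and `L = |W|`. -/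
theorem stmt1 {F : Type*} [Field F] {W X : Type*} [Fintype W] [Fintype X]
    [DecidableEq W] [DecidableEq X]
    (G : Matrix W W F) (Xb : Matrix W X F)
    (hG : IsUnit (1 - G))
    (Wb : Finset W) :
    ((((1 - G)⁻¹ * Xb).submatrix (fun i : ↥Wb => (i : W)) id).rank : ℤ)
      = ((Matrix.fromCols
            ((G - 1).submatrix id (fun j : ↥(Wbᶜ) => (j : W))) Xb).rank : ℤ)
        + (Wb.card : ℤ) - (Fintype.card W : ℤ) :=
  stmt1_general G Xb hG Wb
end

section
/- Let W̄ ⊆ W and let C : Matrix W̄ W F be the selection matrix with C i j = 1 if j = i and C i j = 0 otherwise. Consider the (W ⊕ W̄) × (W ⊕ X) block matrix F̄ = [[G − I, X̄],[C, 0]]. Then rank(F̄) = rank(T_{W̄, X}) + L, where T_{W̄, X} = C · (I − G)⁻¹ · X̄ and L = |W|. -/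
/-!
Since `G - I = -(I - G)` is invertible, block Gaussian elimination against it factors `F̄` as
a unit lower-triangular matrix, times `diag(G - I, S)`, times a unit upper-triangular matrix,
where the Schur complement is `S = 0 - C (G - I)⁻¹ X̄ = C (I - G)⁻¹ X̄`. Rank is invariant under
the outer factors and additive on block-diagonal matrices, and `G - I` has full rank `L`.
-/

open Matrix

def Submodule.prodEquiv {R M N : Type*} [Semiring R] [AddCommMonoid M] [AddCommMonoid N]
    [Module R M] [Module R N] (p : Submodule R M) (q : Submodule R N) :
    p.prod q ≃ₗ[R] p × q where
  toFun x := (⟨x.1.1, x.2.1⟩, ⟨x.1.2, x.2.2⟩)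
  invFun x := ⟨(x.1.1, x.2.1), ⟨x.1.2, x.2.2⟩⟩
  map_add' _ _ := rfl
  map_smul' _ _ := rfl
  left_inv _ := rfl
  right_inv _ := rfl

theorem LinearMap.finrank_range_prodMap {K M N M' N' : Type*} [DivisionRing K]
    [AddCommGroup M] [AddCommGroup N] [AddCommGroup M'] [AddCommGroup N']
    [Module K M] [Module K N] [Module K M'] [Module K N']
    [FiniteDimensional K M] [FiniteDimensional K N] (f : M →ₗ[K] M') (g : N →ₗ[K] N') :
    Module.finrank K (f.prodMap g).range = Module.finrank K f.range + Module.finrank K g.range := by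
  rw [LinearMap.range_prodMap, (Submodule.prodEquiv _ _).finrank_eq, Module.finrank_prod]

theorem Matrix.rank_fromBlocks_zero₁₂_zero₂₁ {K l m n o : Type*} [Field K]
    [Fintype m] [Fintype o] (A : Matrix l m K) (D : Matrix n o K) :
    (fromBlocks A 0 0 D).rank = A.rank + D.rank := by
  classical
  let eDom := LinearEquiv.sumArrowLequivProdArrow m o K K
  let eCod := LinearEquiv.sumArrowLequivProdArrow l n K K
  have hfactor : (fromBlocks A 0 0 D).mulVecLin
      = eCod.symm.toLinearMap ∘ₗ A.mulVecLin.prodMap D.mulVecLin ∘ₗ eDom.toLinearMap := by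
    refine LinearMap.ext fun v => funext fun i => ?_
    rcases i with i | i <;>
      simp [eDom, eCod, fromBlocks_mulVec, LinearEquiv.sumArrowLequivProdArrow,
        Equiv.sumArrowEquivProdArrow]
  rw [rank, hfactor, LinearMap.range_comp, LinearMap.range_comp, LinearEquiv.range,
    Submodule.map_top, LinearEquiv.finrank_map_eq, LinearMap.finrank_range_prodMap]
  rfl

theorem Matrix.rank_fromBlocks_of_invertible₁₁ {K l m n : Type*} [Field K]
    [Fintype l] [Fintype m] [DecidableEq m] [Fintype n]
    (A : Matrix m m K) (B : Matrix m n K) (C : Matrix l m K) (D : Matrix l n K) [Invertible A] :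
    (fromBlocks A B C D).rank = Fintype.card m + (D - C * ⅟A * B).rank := by
  classical
  have hlower : IsUnit (fromBlocks 1 0 (C * ⅟A) (1 : Matrix l l K)).det := by simp
  have hupper : IsUnit (fromBlocks 1 (⅟A * B) 0 (1 : Matrix n n K)).det := by simp
  rw [fromBlocks_eq_of_invertible₁₁, rank_mul_eq_left_of_isUnit_det _ _ hupper,
    rank_mul_eq_right_of_isUnit_det _ _ hlower, rank_fromBlocks_zero₁₂_zero₂₁,
    rank_of_isUnit A (isUnit_of_invertible A)]

theorem stmt2_general {F : Type*} [Field F] {W X : Type*} [Fintype W] [Fintype X]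
    [DecidableEq W]
    (G : Matrix W W F) (Xb : Matrix W X F)
    (hG : IsUnit (1 - G))
    (Wb : Finset W)
    (C : Matrix ↥Wb W F) :
    (Matrix.fromBlocks (G - 1) Xb C 0).rank
      = (C * (1 - G)⁻¹ * Xb).rank + Fintype.card W := by
  have : Invertible (1 - G) := hG.invertible
  have : Invertible (-(1 - G)) := invertibleNeg _
  rw [← neg_sub 1 G, rank_fromBlocks_of_invertible₁₁, invOf_neg, invOf_eq_nonsing_inv]
  simp only [Matrix.mul_neg, Matrix.neg_mul, zero_sub, neg_neg]
  exact add_comm _ _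

/-- For the selection matrix `C` of the subset `W̄ ⊆ W`, the block matrix
`F̄ = [[G - I, X̄], [C, 0]]` satisfies
`rank F̄ = rank (C * (I - G)⁻¹ * X̄) + L` with `L = |W|`. -/
theorem stmt2 {F : Type*} [Field F] {W X : Type*} [Fintype W] [Fintype X]
    [DecidableEq W] [DecidableEq X]
    (G : Matrix W W F) (Xb : Matrix W X F)
    (hG : IsUnit (1 - G))
    (Wb : Finset W)
    (C : Matrix ↥Wb W F)
    (hC : ∀ (i : ↥Wb) (j : W), C i j = if j = (i : W) then 1 else 0) :
    (Matrix.fromBlocks (G - 1) Xb C 0).rank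
      = (C * (1 - G)⁻¹ * Xb).rank + Fintype.card W :=
  stmt2_general G Xb hG Wb C
end

section
/- Let F be a field, R, K, C finite index types, f : K → C an injective map, and M : Matrix (R ⊕ K) C F a matrix such that for every k ∈ K the row of M indexed by k is the standard basis row vector supported at column f k (i.e. M k c = 1 if c = f k and M k c = 0 otherwise). Then rank(M) = |K| + rank(M'), where M' is the submatrix of M consisting of the rows indexed by R and the columns indexed by C ∖ range f. -/
/-!
The rows of `M` indexed by `K` span the space of vectors supported on `range f`, which is the
kernel of the restriction `π` of vectors to the columns outside `range f`. So the row space of `M`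
is `S ⊔ ker π`, with `S` spanned by the rows indexed by `R`, and rank–nullity for `π` on it gives
dimension `dim (ker π) + dim π(S) = |K| + rank M'`, as `π` sends the rows of `S` to those of `M'`.
-/

open Module LinearMap Submodule

theorem finrank_sup_ker_eq_add_finrank_map {K V W : Type*} [DivisionRing K] [AddCommGroup V]
    [Module K V] [AddCommGroup W] [Module K W] [FiniteDimensional K V] (π : V →ₗ[K] W)
    (S : Submodule K V) :
    finrank K ↥(S ⊔ ker π) = finrank K (ker π) + finrank K ↥(S.map π) := by
  have h := (π.domRestrict (S ⊔ ker π)).finrank_range_add_finrank_ker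
  rw [range_domRestrict, Submodule.map_sup, le_ker_iff_map.1 le_rfl, sup_bot_eq,
    ker_domRestrict, (comapSubtypeEquivOfLe le_sup_right).finrank_eq] at h
  omega

theorem ker_funLeft_compl_image_eq_span_single {F K C : Type*} [Field F] [Fintype K] [Fintype C]
    [DecidableEq C] (f : K → C) :
    ker (funLeft F F (fun c : ↥((Finset.univ.image f)ᶜ) => (c : C))) =
      span F (Set.range fun k => Pi.single (f k) 1) := by
  refine le_antisymm (fun x hx => ?_) (span_le.2 ?_)
  · rw [pi_eq_sum_univ' x]
    refine sum_mem fun c _ => ?_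
    by_cases hc : c ∈ Finset.univ.image f
    · obtain ⟨k, -, rfl⟩ := Finset.mem_image.1 hc
      exact smul_mem _ _ (subset_span ⟨k, rfl⟩)
    · have hxc : x c = 0 := congr_fun hx ⟨c, Finset.mem_compl.2 hc⟩
      simp [hxc]
  · rintro _ ⟨k, rfl⟩
    ext ⟨c, hc⟩
    simp only [Finset.mem_compl, Finset.mem_image, Finset.mem_univ, true_and, not_exists] at hc
    simp [funLeft_apply, hc]

theorem stmt3_general {F : Type*} [Field F] {R K C : Type*}
    [Fintype R] [Fintype K] [Fintype C] [DecidableEq C]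
    (f : K → C) (hf : Function.Injective f)
    (M : Matrix (R ⊕ K) C F)
    (hM : ∀ (k : K) (c : C), M (Sum.inr k) c = if c = f k then 1 else 0) :
    M.rank = Fintype.card K
      + (M.submatrix Sum.inl
          (fun c : ↥((Finset.univ.image f)ᶜ) => (c : C))).rank := by
  have hrows : M.row ∘ Sum.inr = fun k => Pi.single (f k) 1 := by
    ext k c
    simp [hM, Pi.single_apply]
  have hsingle : LinearIndependent F fun k => (Pi.single (f k) 1 : C → F) := by
    simpa only [Function.comp_def, Pi.basisFun_apply] using
      (Pi.basisFun F C).linearIndependent.comp f hf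
  rw [Matrix.rank_eq_finrank_span_row, Matrix.rank_eq_finrank_span_row, Sum.range_eq,
    span_union, hrows, ← ker_funLeft_compl_image_eq_span_single,
    finrank_sup_ker_eq_add_finrank_map, ker_funLeft_compl_image_eq_span_single,
    finrank_span_eq_card hsingle, Submodule.map_span, ← Set.range_comp]
  rfl

/-- If the rows of `M` indexed by `K` are standard basis row vectors supported
at the (pairwise distinct) columns `f k`, then
`rank M = |K| + rank M'`, where `M'` is the submatrix of `M` given by the rows
indexed by `R` and the columns outside the range of `f`. -/
theorem stmt3 {F : Type*} [Field F] {R K C : Type*}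
    [Fintype R] [Fintype K] [Fintype C] [DecidableEq K] [DecidableEq C]
    (f : K → C) (hf : Function.Injective f)
    (M : Matrix (R ⊕ K) C F)
    (hM : ∀ (k : K) (c : C), M (Sum.inr k) c = if c = f k then 1 else 0) :
    M.rank = Fintype.card K
      + (M.submatrix Sum.inl
          (fun c : ↥((Finset.univ.image f)ᶜ) => (c : C))).rank :=
  stmt3_general f hf M hM
end

section
/- Let F be a field and M : Matrix (Fin n) (Fin n) F with n ≥ 1. Suppose M is NOT structurally full rank, i.e. every matrix N : Matrix (Fin n) (Fin n) F satisfying N i j = 0 whenever M i j = 0 has det N = 0. Then there exist a natural number k with 1 ≤ k ≤ n and permutations σ, τ of Fin n such that the permuted matrix M' defined by M' i j = M (σ i) (τ j) has a zero block occupying its first k rows and its last n − k + 1 columns, i.e. M (σ i) (τ j) = 0 for all i, j with (i : ℕ) < k and (j : ℕ) ≥ k − 1 (so the top-left block of M' has k rows and only k − 1 columns). -/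
/-!
If every matrix with the zero pattern of `M` is singular, then no permutation `σ` has
`M i (σ i) ≠ 0` for all `i`, since its permutation matrix would be a nonsingular matrix with
that pattern. By Hall's marriage theorem some set `A` of rows has all its nonzero entries in a
set `T` of fewer than `#A` columns. Permuting `A` to the first `#A` rows and `T` to the first
`#T ≤ #A - 1` columns exposes the zero block.
-/

open Finset

theorem Fin.exists_perm_mem_iff_lt_card {n : ℕ} (s : Finset (Fin n)) :
    ∃ σ : Equiv.Perm (Fin n), ∀ i, σ i ∈ s ↔ (i : ℕ) < #s := by
  have hcard : Fintype.card {i : Fin n // (i : ℕ) < #s} = Fintype.card {x // x ∈ s} := by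
    rw [Fintype.card_subtype, Fin.card_filter_val_lt, Fintype.card_coe,
      min_eq_right (card_le_univ s |>.trans_eq (Fintype.card_fin n))]
  let e := Fintype.equivOfCardEq hcard
  refine ⟨e.extendSubtype, fun i => ⟨fun hi => ?_, e.extendSubtype_mem i⟩⟩
  by_contra hlt
  exact e.extendSubtype_not_mem i hlt hi

theorem Matrix.det_permMatrix_ne_zero {ι R : Type*} [Fintype ι] [DecidableEq ι]
    [CommRing R] [Nontrivial R] (σ : Equiv.Perm ι) : (σ.permMatrix R).det ≠ 0 := by
  rw [Matrix.det_permutation]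
  rcases Int.units_eq_one_or (Equiv.Perm.sign σ) with hs | hs <;> simp [hs]

theorem Matrix.permMatrix_eq_zero_of_eq_zero {ι α R : Type*} [DecidableEq ι] [Zero α]
    [Zero R] [One R] {M : Matrix ι ι α} {σ : Equiv.Perm ι} (hσ : ∀ i, M i (σ i) ≠ 0)
    {i j : ι} (hij : M i j = 0) : σ.permMatrix R i j = 0 := by
  have hne : σ i ≠ j := by rintro rfl; exact hσ i hij
  simp [Equiv.Perm.permMatrix, PEquiv.toMatrix_apply, hne]

/-- One direction of the Frobenius–König theorem. -/
theorem Matrix.exists_zero_block_of_forall_det_eq_zero {ι α R : Type*} [Fintype ι]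
    [DecidableEq ι] [Zero α] [CommRing R] [Nontrivial R] (M : Matrix ι ι α)
    (h : ∀ N : Matrix ι ι R, (∀ i j, M i j = 0 → N i j = 0) → N.det = 0) :
    ∃ A T : Finset ι, #T < #A ∧ ∀ i ∈ A, ∀ j ∉ T, M i j = 0 := by
  classical
  let rowSupport (i : ι) : Finset ι := {j | M i j ≠ 0}
  suffices ∃ A : Finset ι, #(A.biUnion rowSupport) < #A by
    obtain ⟨A, hA⟩ := this
    refine ⟨A, A.biUnion rowSupport, hA, fun i hi j hj => ?_⟩
    by_contra hM
    exact hj (mem_biUnion.mpr ⟨i, hi, by simp [rowSupport, hM]⟩)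
  by_contra! hHall
  obtain ⟨f, hf_inj, hf⟩ := (all_card_le_biUnion_card_iff_exists_injective rowSupport).mp hHall
  let σ := Equiv.ofBijective f (Finite.injective_iff_bijective.mp hf_inj)
  have hσ : ∀ i, M i (σ i) ≠ 0 := fun i => by simpa [σ, rowSupport] using hf i
  exact Matrix.det_permMatrix_ne_zero σ
    (h _ fun i j => Matrix.permMatrix_eq_zero_of_eq_zero hσ)

theorem stmt5_general {F : Type*} [Field F] {n : ℕ}
    (M : Matrix (Fin n) (Fin n) F)
    (h : ∀ N : Matrix (Fin n) (Fin n) F,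
      (∀ i j, M i j = 0 → N i j = 0) → N.det = 0) :
    ∃ k : ℕ, 1 ≤ k ∧ k ≤ n ∧
      ∃ σ τ : Equiv.Perm (Fin n),
        ∀ i j : Fin n, (i : ℕ) < k → k - 1 ≤ (j : ℕ) → M (σ i) (τ j) = 0 := by
  obtain ⟨A, T, hTA, hzero⟩ := Matrix.exists_zero_block_of_forall_det_eq_zero M h
  obtain ⟨σ, hσ⟩ := Fin.exists_perm_mem_iff_lt_card A
  obtain ⟨τ, hτ⟩ := Fin.exists_perm_mem_iff_lt_card T
  have hAn : #A ≤ n := (card_le_univ A).trans_eq (Fintype.card_fin n)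
  refine ⟨#A, by omega, hAn, σ, τ, fun i j hi hj => hzero _ ((hσ i).mpr hi) _ ?_⟩
  rw [hτ j]
  omega

/-- If a square matrix `M` is not structurally full rank (every matrix with the
same zero pattern has zero determinant), then `M` can be row- and
column-permuted so that a zero block occupies the first `k` rows and the last
`n - k + 1` columns, for some `1 ≤ k ≤ n`. -/
theorem stmt5 {F : Type*} [Field F] {n : ℕ} (hn : 1 ≤ n)
    (M : Matrix (Fin n) (Fin n) F)
    (h : ∀ N : Matrix (Fin n) (Fin n) F,
      (∀ i j, M i j = 0 → N i j = 0) → N.det = 0) :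
    ∃ k : ℕ, 1 ≤ k ∧ k ≤ n ∧
      ∃ σ τ : Equiv.Perm (Fin n),
        ∀ i j : Fin n, (i : ℕ) < k → k - 1 ≤ (j : ℕ) → M (σ i) (τ j) = 0 :=
  stmt5_general M h
end

section
/- Let F be a field, σ a type of variables, and M : Matrix (Fin n) (Fin n) (MvPolynomial σ F) a square matrix every entry of which is either 0 or a single variable, with distinct variables occurring at distinct positions (the assignment of variables to nonzero positions is injective). Let the set of positions of nonzero entries of M be partitioned into two disjoint sets P1 and P2. If det M, viewed as a multivariate polynomial, does not involve any of the variables occurring at P1 positions (i.e. det M lies in the subalgebra generated by the variables occurring at P2 positions), then there exist an integer l ≥ 1, a sign ε ∈ {1, −1}, and square submatrices A₁, …, A_l of M (each given by injective row- and column-index maps into Fin n) such that every nonzero entry of each Aᵢ is located at a P2 position of M, and det M = ε · ∏_{i=1}^{l} det Aᵢ. -/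
private lemma exists_nodup_chain {α : Type*} {r : α → α → Prop} {a b : α}
    (h : Relation.ReflTransGen r a b) :
    ∃ l : List α, List.Chain r a l ∧
      (a :: l).getLast (List.cons_ne_nil _ _) = b ∧ (a :: l).Nodup := by
  classical
  induction h with
  | refl => exact ⟨[], List.Chain.nil, rfl, List.nodup_singleton a⟩
  | @tail c d hac hcd ih =>
    obtain ⟨l, hchain, hlast, hnodup⟩ := ih
    have hch : List.Chain' r (a :: l) := hchain
    by_cases hd : d ∈ a :: l
    · obtain ⟨i, hi, hget⟩ := List.mem_iff_getElem.mp hd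
      rcases i with _ | i
      · exact ⟨[], List.Chain.nil, by simpa using hget, List.nodup_singleton a⟩
      · have hil : i < l.length := by simpa using hi
        have hpre : (a :: l.take (i+1)) <+: (a :: l) :=
          List.cons_prefix_cons.mpr ⟨rfl, List.take_prefix _ _⟩
        have hlen : (l.take (i+1)).length = i + 1 := by
          simp [Nat.succ_le_of_lt hil]
        have hne : l.take (i+1) ≠ [] := by
          apply List.ne_nil_of_length_pos
          omega
        refine ⟨l.take (i+1), hch.prefix hpre, ?_, hnodup.sublist hpre.sublist⟩
        rw [List.getLast_cons hne, List.getLast_eq_getElem]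
        have h2 : (l.take (i+1))[(l.take (i+1)).length - 1]'(by omega) = l[i]'hil := by
          simp [hlen]
        rw [h2]
        simpa using hget
    · have hch2 : List.Chain' r ((a :: l) ++ [d]) := by
        apply List.IsChain.append hch (List.isChain_singleton d)
        intro x hx y hy
        simp only [List.head?_cons, Option.mem_some_iff] at hy
        rw [List.getLast?_eq_getLast (List.cons_ne_nil _ _), Option.mem_some_iff] at hx
        subst hy
        obtain rfl : x = c := hx.symm.trans hlast
        exact hcd
      refine ⟨l ++ [d], hch2, ?_, ?_⟩
      · simp [List.getLast_append]
      · simpa [List.concat_eq_append] using hnodup.concat hd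

private lemma chain_getElem {α : Type*} {r : α → α → Prop} {a : α} {l : List α}
    (h : List.Chain r a l) (t : ℕ) (ht : t + 1 < (a :: l).length) :
    r ((a :: l)[t]'(by omega)) ((a :: l)[t+1]'ht) := by
  induction l generalizing a t with
  | nil => simp at ht
  | cons c l' ih =>
    have h' : List.IsChain r (a :: c :: l') := h
    rw [List.isChain_cons_cons] at h'
    obtain ⟨hab, hch⟩ := h'
    rcases t with _ | t
    · simpa using hab
    · have ht' : t + 1 < (c :: l').length := by simpa using ht
      simpa using ih hch t ht'

private lemma exists_cycle_perm {α : Type*} [DecidableEq α] [Fintype α] {r : α → α → Prop}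
    (hrefl : ∀ k, r k k) {i j : α} (hij : r i j) (hpath : Relation.ReflTransGen r j i) :
    ∃ π : Equiv.Perm α, π j = i ∧ ∀ k, r (π k) k := by
  obtain ⟨l, hchain, hlast, hnodup⟩ := exists_nodup_chain hpath
  set L := j :: l with hL
  have hfi : L.formPerm i = j := by
    have h1 := List.formPerm_apply_getLast j l
    rwa [hlast] at h1
  refine ⟨L.formPerm⁻¹, by rw [← hfi]; simp, fun k => ?_⟩
  by_cases hk : k ∈ L
  · set m := L.formPerm⁻¹ k with hm
    have hfm : L.formPerm m = k := by rw [hm]; simp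
    have hmL : m ∈ L := by
      by_contra hmL
      have h2 : L.formPerm m = m := List.formPerm_apply_of_notMem hmL
      rw [h2] at hfm
      exact hmL (hfm ▸ hk)
    obtain ⟨t, ht, hgt⟩ := List.mem_iff_getElem.mp hmL
    have hfp := List.formPerm_apply_getElem L hnodup t ht
    rw [hgt, hfm] at hfp
    by_cases hlt : t + 1 < L.length
    · have hk2 : k = L[t+1]'hlt := by
        rw [hfp]
        congr 1
        exact Nat.mod_eq_of_lt hlt
      have hstep : r (L[t]'ht) (L[t+1]'hlt) := chain_getElem hchain t hlt
      rw [hgt, ← hk2] at hstep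
      exact hstep
    · have hteq : t + 1 = L.length := by omega
      have hmi : m = i := by
        rw [← hgt, ← hlast]
        rw [List.getLast_eq_getElem]
        congr 1
        simp [hL] at hteq ⊢
        omega
      have hkj : k = j := by
        rw [hfp]
        have h0 : (t + 1) % L.length = 0 := by rw [hteq]; simp
        simp only [h0]
        rfl
      rw [hkj, hmi]
      exact hij
  · have h3 : L.formPerm k = k := List.formPerm_apply_of_notMem hk
    have h4 : L.formPerm⁻¹ k = k := by
      conv_lhs => rw [← h3]
      simp
    rw [h4]
    exact hrefl k

open MvPolynomial in
private lemma prod_X_eq {F : Type*} [Field F] {σ : Type*} {n : ℕ} (s : Fin n → σ) :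
    (∏ k, (MvPolynomial.X (s k) : MvPolynomial σ F))
      = MvPolynomial.monomial (∑ k, Finsupp.single (s k) 1) 1 := by
  classical
  have h : ∀ t : Finset (Fin n), (∏ k ∈ t, (MvPolynomial.X (s k) : MvPolynomial σ F))
      = MvPolynomial.monomial (∑ k ∈ t, Finsupp.single (s k) 1) 1 := by
    intro t
    induction t using Finset.induction with
    | empty => simp
    | @insert a t ha ih =>
      rw [Finset.prod_insert ha, Finset.sum_insert ha, ih, MvPolynomial.X,
        MvPolynomial.monomial_mul, one_mul]
  exact h Finset.univ

private lemma sum_single_apply_ne_zero {σ : Type*} {n : ℕ} (s : Fin n → σ) (k : Fin n) :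
    (∑ k', Finsupp.single (s k') (1:ℕ)) (s k) ≠ 0 := by
  classical
  rw [Finsupp.finset_sum_apply]
  intro h0
  rw [Finset.sum_eq_zero_iff] at h0
  have := h0 k (Finset.mem_univ k)
  simp [Finsupp.single_apply] at this

private lemma coeff_det_contrib {F : Type*} [Field F] {σ : Type*} {n : ℕ}
    (M : Matrix (Fin n) (Fin n) (MvPolynomial σ F))
    (hvar : ∀ i j, M i j = 0 ∨ ∃ s : σ, M i j = MvPolynomial.X s)
    (hinj : ∀ (i j i' j' : Fin n) (s : σ),
      M i j = MvPolynomial.X s → M i' j' = MvPolynomial.X s → (i, j) = (i', j'))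
    (τ : Equiv.Perm (Fin n)) (s : Fin n → σ)
    (hs : ∀ k, M (τ k) k = MvPolynomial.X (s k)) :
    MvPolynomial.coeff (∑ k, Finsupp.single (s k) 1) M.det
      = ((Equiv.Perm.sign τ : ℤ) : F) := by
  classical
  rw [Matrix.det_apply', MvPolynomial.coeff_sum]
  rw [Finset.sum_eq_single τ ?h1 ?h2]
  case h2 => intro h; exact absurd (Finset.mem_univ τ) h
  case h1 =>
    intro τ' _ hne
    by_cases hz : ∀ k, M (τ' k) k ≠ 0
    · have hex : ∀ k, ∃ t : σ, M (τ' k) k = MvPolynomial.X t :=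
        fun k => (hvar (τ' k) k).resolve_left (hz k)
      choose s' hs' using hex
      have hprod : (∏ i, M (τ' i) i) = MvPolynomial.monomial (∑ k, Finsupp.single (s' k) 1) 1 := by
        rw [show (∏ i, M (τ' i) i) = ∏ i, (MvPolynomial.X (s' i) : MvPolynomial σ F) from
          Finset.prod_congr rfl fun i _ => hs' i]
        exact prod_X_eq s'
      have hdne : (∑ k, Finsupp.single (s' k) (1:ℕ)) ≠ ∑ k, Finsupp.single (s k) 1 := by
        intro heq
        apply hne
        ext kk
        have h1 : ((∑ k', Finsupp.single (s' k') (1:ℕ))) (s kk) ≠ 0 := by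
          rw [heq]; exact sum_single_apply_ne_zero s kk
        rw [Finsupp.finset_sum_apply] at h1
        obtain ⟨k', _, hk'⟩ := Finset.exists_ne_zero_of_sum_ne_zero h1
        have hk'2 : s' k' = s kk := by
          by_contra hc
          rw [Finsupp.single_apply, if_neg hc] at hk'
          exact hk' rfl
        have h4 := hinj (τ' k') k' (τ kk) kk (s kk) (hk'2 ▸ hs' k') (hs kk)
        rw [Prod.mk.injEq] at h4
        obtain ⟨h2, h3⟩ := h4
        exact congrArg Fin.val (h3 ▸ h2)
      rw [hprod, show ((Equiv.Perm.sign τ' : ℤ) : MvPolynomial σ F)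
          = MvPolynomial.C ((Equiv.Perm.sign τ' : ℤ) : F) from (map_intCast (MvPolynomial.C : F →+* MvPolynomial σ F) _).symm,
        MvPolynomial.coeff_C_mul, MvPolynomial.coeff_monomial, if_neg hdne, mul_zero]
    · push_neg at hz
      obtain ⟨k, hk⟩ := hz
      have hzero : (∏ i, M (τ' i) i) = 0 := Finset.prod_eq_zero (Finset.mem_univ k) hk
      rw [hzero, mul_zero, MvPolynomial.coeff_zero]
  · have hprod : (∏ i, M (τ i) i) = MvPolynomial.monomial (∑ k, Finsupp.single (s k) 1) 1 := by
      rw [show (∏ i, M (τ i) i) = ∏ i, (MvPolynomial.X (s i) : MvPolynomial σ F) from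
        Finset.prod_congr rfl fun i _ => hs i]
      exact prod_X_eq s
    rw [hprod, show ((Equiv.Perm.sign τ : ℤ) : MvPolynomial σ F)
        = MvPolynomial.C ((Equiv.Perm.sign τ : ℤ) : F) from (map_intCast (MvPolynomial.C : F →+* MvPolynomial σ F) _).symm,
      MvPolynomial.coeff_C_mul, MvPolynomial.coeff_monomial, if_pos rfl, mul_one]

private def sccSetoid {α : Type*} (r : α → α → Prop) : Setoid α where
  r a b := Relation.ReflTransGen r a b ∧ Relation.ReflTransGen r b a
  iseqv := ⟨fun _ => ⟨.refl, .refl⟩, fun h => ⟨h.2, h.1⟩,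
    fun h h' => ⟨h.1.trans h'.1, h'.2.trans h.2⟩⟩

private def sccOrder {α : Type*} (r : α → α → Prop) : PartialOrder (Quotient (sccSetoid r)) where
  le x y := Quotient.liftOn₂ x y (fun a b => Relation.ReflTransGen r a b)
    (fun _ _ _ _ ha hb => propext
      ⟨fun h => (ha.2.trans h).trans hb.1, fun h => (ha.1.trans h).trans hb.2⟩)
  le_refl x := Quotient.inductionOn x fun _ => Relation.ReflTransGen.refl
  le_trans x y z := Quotient.inductionOn₃ x y z fun _ _ _ hab hbc => Relation.ReflTransGen.trans hab hbc
  le_antisymm x y := Quotient.inductionOn₂ x y fun _ _ hab hba => Quotient.sound ⟨hab, hba⟩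


/-- Let `M` be a square matrix over `MvPolynomial σ F` each entry of which is
either `0` or a single variable, with distinct variables at distinct positions.
Partition the nonzero positions into disjoint sets `P1` and `P2`.  If `det M`
lies in the subalgebra generated by the variables occurring at `P2` positions,
then `det M = ε * ∏ i, det Aᵢ` for some sign `ε ∈ {1, -1}` and square
submatrices `A₁, …, A_l` of `M` (`l ≥ 1`) all of whose nonzero entries are
located at `P2` positions. -/
theorem stmt6 {F : Type*} [Field F] {σ : Type*} {n : ℕ}
    (M : Matrix (Fin n) (Fin n) (MvPolynomial σ F))
    (hvar : ∀ i j, M i j = 0 ∨ ∃ s : σ, M i j = MvPolynomial.X s)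
    (hinj : ∀ (i j i' j' : Fin n) (s : σ),
      M i j = MvPolynomial.X s → M i' j' = MvPolynomial.X s → (i, j) = (i', j'))
    (P1 P2 : Set (Fin n × Fin n))
    (hdisj : Disjoint P1 P2)
    (hcover : P1 ∪ P2 = {p : Fin n × Fin n | M p.1 p.2 ≠ 0})
    (hdet : M.det ∈ Algebra.adjoin F
      {q : MvPolynomial σ F | ∃ p ∈ P2, q = M p.1 p.2}) :
    ∃ l : ℕ, 1 ≤ l ∧
      ∃ ε : MvPolynomial σ F, (ε = 1 ∨ ε = -1) ∧
        ∃ (m : Fin l → ℕ) (ρ : ∀ i : Fin l, Fin (m i) → Fin n)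
          (γ : ∀ i : Fin l, Fin (m i) → Fin n),
          (∀ i, Function.Injective (ρ i)) ∧
          (∀ i, Function.Injective (γ i)) ∧
          (∀ (i : Fin l) (a b : Fin (m i)),
            M.submatrix (ρ i) (γ i) a b ≠ 0 → (ρ i a, γ i b) ∈ P2) ∧
          M.det = ε * ∏ i : Fin l, (M.submatrix (ρ i) (γ i)).det := by
  classical
  -- Step 1: every contributing permutation has all its positions in P2
  have hT2 : ∀ (τ : Equiv.Perm (Fin n)), (∀ k, M (τ k) k ≠ 0) → ∀ k, (τ k, k) ∈ P2 := by
    intro τ hτ k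
    have hex : ∀ k, ∃ t, M (τ k) k = MvPolynomial.X t :=
      fun k => (hvar _ _).resolve_left (hτ k)
    choose s hs using hex
    have hcoeff := coeff_det_contrib M hvar hinj τ s hs
    have hsupp : (∑ k, Finsupp.single (s k) 1) ∈ M.det.support := by
      rw [MvPolynomial.mem_support_iff, hcoeff]
      rcases Int.units_eq_one_or (Equiv.Perm.sign τ) with h | h <;> rw [h] <;> norm_num
    have hvars : s k ∈ M.det.vars := by
      rw [MvPolynomial.mem_vars]
      exact ⟨_, hsupp, by rw [Finsupp.mem_support_iff]
                          exact sum_single_apply_ne_zero s k⟩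
    have hsub : M.det ∈
        MvPolynomial.supported F {t : σ | ∃ p ∈ P2, M p.1 p.2 = MvPolynomial.X t} := by
      have hss : {q : MvPolynomial σ F | ∃ p ∈ P2, q = M p.1 p.2} ⊆
          MvPolynomial.X '' {t : σ | ∃ p ∈ P2, M p.1 p.2 = MvPolynomial.X t} := by
        rintro q ⟨p, hp, rfl⟩
        have hpne : M p.1 p.2 ≠ 0 := by
          have hmem : p ∈ P1 ∪ P2 := Set.mem_union_right _ hp
          rw [hcover] at hmem
          exact hmem
        obtain ⟨t, ht⟩ := (hvar p.1 p.2).resolve_left hpne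
        exact ⟨t, ⟨p, hp, ht⟩, ht.symm⟩
      exact Algebra.adjoin_mono hss hdet
    rw [MvPolynomial.mem_supported] at hsub
    obtain ⟨p, hp, hpX⟩ := hsub hvars
    have heq := hinj p.1 p.2 (τ k) k (s k) hpX (hs k)
    have hpp : p = (τ k, k) := Prod.mk.eta.symm.trans heq
    rwa [hpp] at hp
  rcases Nat.eq_zero_or_pos n with hn | hn
  · -- n = 0 : the determinant is 1
    subst hn
    refine ⟨1, le_refl 1, 1, Or.inl rfl, fun _ => 0,
      fun _ => (fun x => x), fun _ => (fun x => x), ?_, ?_, ?_, ?_⟩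
    · intro i x y h; exact h
    · intro i x y h; exact h
    · intro i a b _; exact a.elim0
    · rw [one_mul]
      rw [show (M.det : MvPolynomial σ F) = 1 from Matrix.det_fin_zero]
      symm
      apply Finset.prod_eq_one
      intro i _
      exact Matrix.det_fin_zero
  by_cases hdet0 : M.det = 0
  · -- the determinant is zero: use a 1×1 zero submatrix
    have hzero : ∃ i j, M i j = 0 := by
      by_contra h
      push_neg at h
      have hex : ∀ k, ∃ t, M ((1 : Equiv.Perm (Fin n)) k) k = MvPolynomial.X t :=
        fun k => (hvar k k).resolve_left (h k k)
      choose s hs using hex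
      have hc := coeff_det_contrib M hvar hinj 1 s hs
      rw [hdet0] at hc
      simp at hc
    obtain ⟨i0, j0, hij0⟩ := hzero
    refine ⟨1, le_refl 1, 1, Or.inl rfl, fun _ => 1,
      fun _ _ => i0, fun _ _ => j0, ?_, ?_, ?_, ?_⟩
    · intro i x y _; exact Subsingleton.elim x y
    · intro i x y _; exact Subsingleton.elim x y
    · intro i a b hab
      exact absurd hij0 hab
    · rw [hdet0, one_mul]
      symm
      apply Finset.prod_eq_zero (Finset.mem_univ (0 : Fin 1))
      rw [Matrix.det_fin_one]
      exact hij0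
  · -- nonzero determinant: block-triangular decomposition
    have hcontrib : ∃ τ : Equiv.Perm (Fin n), ∀ k, M (τ k) k ≠ 0 := by
      by_contra h
      push_neg at h
      apply hdet0
      rw [Matrix.det_apply']
      refine Finset.sum_eq_zero fun τ _ => ?_
      obtain ⟨k, hk⟩ := h τ
      have hz : (∏ i, M (τ i) i) = 0 := Finset.prod_eq_zero (Finset.mem_univ k) hk
      rw [hz, mul_zero]
    obtain ⟨τ₀, hτ₀⟩ := hcontrib
    set N : Matrix (Fin n) (Fin n) (MvPolynomial σ F) := M.submatrix τ₀ id with hNdef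
    set r : Fin n → Fin n → Prop := fun a c => N a c ≠ 0 with hrdef
    letI po := sccOrder r
    set b : Fin n → LinearExtension (Quotient (sccSetoid r)) :=
      fun k => toLinearExtension (Quotient.mk (sccSetoid r) k) with hbdef
    have hBT : N.BlockTriangular b := by
      intro x y hxy
      by_contra hne
      have hrxy : r x y := hne
      have hle : @LE.le _ po.toLE (Quotient.mk (sccSetoid r) x) (Quotient.mk (sccSetoid r) y) :=
        (Relation.ReflTransGen.single hrxy : Relation.ReflTransGen r x y)
      have hble : b x ≤ b y := @OrderHom.monotone _ _ po.toPreorder _ toLinearExtension _ _ hle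
      exact absurd hxy (not_lt.mpr hble)
    haveI : Nonempty (Fin n) := ⟨⟨0, hn⟩⟩
    set I : Finset (LinearExtension (Quotient (sccSetoid r))) := Finset.univ.image b with hIdef
    have hIne : I.Nonempty := Finset.Nonempty.image Finset.univ_nonempty b
    set ee : Fin I.card ≃ I := I.equivFin.symm with heedef
    set m : Fin I.card → ℕ := fun i => Fintype.card {k : Fin n // b k = (ee i : _)} with hmdef
    set eqi : ∀ i : Fin I.card, Fin (m i) ≃ {k : Fin n // b k = (ee i : _)} :=
      fun i => (Fintype.equivFin _).symm with heqidef
    set ρ : ∀ i : Fin I.card, Fin (m i) → Fin n := fun i x => τ₀ ((eqi i x : _) : Fin n)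
      with hρdef
    set γ : ∀ i : Fin I.card, Fin (m i) → Fin n := fun i x => ((eqi i x : _) : Fin n)
      with hγdef
    set ε : MvPolynomial σ F := ((Equiv.Perm.sign τ₀ : ℤ) : MvPolynomial σ F) with hεdef
    have hεcases : ε = 1 ∨ ε = -1 := by
      rcases Int.units_eq_one_or (Equiv.Perm.sign τ₀) with h | h
      · left; rw [hεdef, h]; norm_num
      · right; rw [hεdef, h]; norm_num
    refine ⟨I.card, Finset.card_pos.mpr hIne, ε, hεcases, m, ρ, γ, ?_, ?_, ?_, ?_⟩
    · intro i
      exact τ₀.injective.comp (Subtype.val_injective.comp (eqi i).injective)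
    · intro i
      exact Subtype.val_injective.comp (eqi i).injective
    · intro i x y hxy
      have hNuv : N (eqi i x : _) (eqi i y : _) ≠ 0 := hxy
      have hbe : Quotient.mk (sccSetoid r) ((eqi i x : _) : Fin n)
          = Quotient.mk (sccSetoid r) ((eqi i y : _) : Fin n) := by
        have h1 : b ((eqi i x : _) : Fin n) = b ((eqi i y : _) : Fin n) :=
          (eqi i x).2.trans (eqi i y).2.symm
        exact h1
      have hvu : Relation.ReflTransGen r ((eqi i y : _) : Fin n) ((eqi i x : _) : Fin n) :=
        (Quotient.exact hbe).2
      obtain ⟨π, hπv, hπ⟩ := exists_cycle_perm (r := r) (fun k => hτ₀ k) hNuv hvu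
      have hcontrib2 : ∀ k, M ((τ₀ * π) k) k ≠ 0 := fun k => hπ k
      have hmem := hT2 (τ₀ * π) hcontrib2 ((eqi i y : _) : Fin n)
      have h2 : (τ₀ * π) ((eqi i y : _) : Fin n) = τ₀ ((eqi i x : _) : Fin n) := by
        rw [Equiv.Perm.mul_apply, hπv]
      rw [h2] at hmem
      exact hmem
    · have hdetN : N.det = ∏ a ∈ I, (N.toSquareBlock b a).det := hBT.det
      have hNM : N.det = ε * M.det := Matrix.det_permute τ₀ M
      have hεε : ε * ε = 1 := by
        rcases Int.units_eq_one_or (Equiv.Perm.sign τ₀) with h | h <;>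
          rw [hεdef, h] <;> norm_num
      have hblocks : ∀ i : Fin I.card,
          (N.toSquareBlock b (ee i : _)).det = (M.submatrix (ρ i) (γ i)).det := by
        intro i
        rw [← Matrix.det_submatrix_equiv_self (eqi i) (N.toSquareBlock b (ee i : _))]
        rfl
      calc M.det = ε * (ε * M.det) := by rw [← mul_assoc, hεε, one_mul]
        _ = ε * N.det := by rw [hNM]
        _ = ε * ∏ a ∈ I, (N.toSquareBlock b a).det := by rw [hdetN]
        _ = ε * ∏ i : Fin I.card, (M.submatrix (ρ i) (γ i)).det := by
            congr 1
            rw [← Finset.prod_coe_sort I (fun a => (N.toSquareBlock b a).det)]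
            rw [← Equiv.prod_comp ee (fun a : I => (N.toSquareBlock b (a : _)).det)]
            exact Finset.prod_congr rfl fun i _ => hblocks i
end

section
/- Let r be a directed graph on a vertex type V and let V1, V2 be vertex sets. Given a finite set P of pairwise vertex-disjoint paths from V1 to V2, there exists a set P_new of pairwise vertex-disjoint paths from V1 to V2 with |P_new| = |P| such that every internal vertex of every path in P_new lies outside V1 ∪ V2. -/
/-- A path in a directed graph `r`: a nonempty duplicate-free list of vertices
in which every pair of consecutive entries is related by `r`. -/
def IsPath {V : Type*} (r : V → V → Prop) (l : List V) : Prop :=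
  l ≠ [] ∧ l.Nodup ∧ l.Chain' r

/-- A path from the vertex set `V1` to the vertex set `V2`. -/
def IsPathFromTo {V : Type*} (r : V → V → Prop) (V1 V2 : Set V) (l : List V) : Prop :=
  IsPath r l ∧ ∀ h : l ≠ [], l.head h ∈ V1 ∧ l.getLast h ∈ V2

/-!
Replace each path by its segment from its last vertex in `V1` to the first vertex in `V2`
after that one: the segment is again a path from `V1` to `V2` with no internal vertex in
`V1 ∪ V2`. The segments are nonempty and contained in the original, pairwise disjoint
paths, so they are pairwise disjoint and distinct paths yield distinct segments.
-/

namespace List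

variable {α : Type*}

theorem exists_eq_append_cons_forall_not_mem_left {p : α → Prop} {l : List α}
    (h : ∃ x ∈ l, p x) : ∃ s a t, l = s ++ a :: t ∧ p a ∧ ∀ x ∈ s, ¬ p x := by
  classical
  have hsome : (l.find? fun x => decide (p x)).isSome := find?_isSome.mpr (by simpa using h)
  obtain ⟨a, ha⟩ := Option.isSome_iff_exists.mp hsome
  obtain ⟨hpa, s, t, rfl, hs⟩ := find?_eq_some_iff_append.mp ha
  exact ⟨s, a, t, rfl, by simpa using hpa, fun x hx => by simpa using hs x hx⟩

theorem exists_eq_append_cons_forall_not_mem_right {p : α → Prop} {l : List α}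
    (h : ∃ x ∈ l, p x) : ∃ s a t, l = s ++ a :: t ∧ p a ∧ ∀ x ∈ t, ¬ p x := by
  obtain ⟨s, a, t, hl, hpa, hs⟩ :=
    exists_eq_append_cons_forall_not_mem_left (l := l.reverse) (by simpa using h)
  refine ⟨t.reverse, a, s.reverse, ?_, hpa, fun x hx => hs x (mem_reverse.mp hx)⟩
  simpa using congrArg reverse hl

theorem exists_infix_head_mem_getLast_mem_tail_dropLast_not_mem {A B : Set α} {l : List α}
    (hl : l ≠ []) (hA : l.head hl ∈ A) (hB : l.getLast hl ∈ B) :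
    ∃ l', l' <:+: l ∧ ∃ hl' : l' ≠ [], l'.head hl' ∈ A ∧ l'.getLast hl' ∈ B ∧
      ∀ x ∈ l'.tail.dropLast, x ∉ A ∪ B := by
  obtain ⟨s, a, t, rfl, ha, ht⟩ :=
    exists_eq_append_cons_forall_not_mem_right (p := (· ∈ A)) ⟨_, head_mem hl, hA⟩
  have hlast : (a :: t).getLast (cons_ne_nil a t) ∈ B := by
    rwa [(suffix_append s (a :: t)).getLast]
  obtain ⟨s', b, u, hsplit, hb, hs'⟩ :=
    exists_eq_append_cons_forall_not_mem_left (p := (· ∈ B)) ⟨_, getLast_mem _, hlast⟩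
  have hpre : s' ++ [b] <+: a :: t := ⟨u, by simp [hsplit]⟩
  refine ⟨s' ++ [b], hpre.isInfix.trans (suffix_append s (a :: t)).isInfix, by simp, ?_,
    by simpa, ?_⟩
  · rw [hpre.head]; simpa
  · intro x hx
    cases s' with
    | nil => simp at hx
    | cons c s'' =>
      obtain ⟨-, rfl⟩ := cons_eq_cons.mp hsplit
      simp only [cons_append, tail_cons, dropLast_concat] at hx
      simp only [Set.mem_union, not_or]
      exact ⟨ht x (by simp [hx]), hs' x (mem_cons_of_mem c hx)⟩

end List

section Paths

variable {V : Type*} {r : V → V → Prop} {l l' : List V}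

theorem IsPath.infix (hl : IsPath r l) (h : l' <:+: l) (hne : l' ≠ []) : IsPath r l' :=
  ⟨hne, hl.2.1.sublist h.sublist, hl.2.2.infix h⟩

theorem IsPathFromTo.exists_infix_tail_dropLast_not_mem {V1 V2 : Set V}
    (hl : IsPathFromTo r V1 V2 l) :
    ∃ l', l' <:+: l ∧ IsPathFromTo r V1 V2 l' ∧ ∀ v ∈ l'.tail.dropLast, v ∉ V1 ∪ V2 := by
  obtain ⟨hV1, hV2⟩ := hl.2 hl.1.1
  obtain ⟨l', hinf, hne', hV1', hV2', hint⟩ :=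
    List.exists_infix_head_mem_getLast_mem_tail_dropLast_not_mem hl.1.1 hV1 hV2
  exact ⟨l', hinf, ⟨hl.1.infix hinf hne', fun _ => ⟨hV1', hV2'⟩⟩, hint⟩

end Paths

def VertexDisjoint {α : Type*} (P : Finset (List α)) : Prop :=
  ∀ l₁ ∈ P, ∀ l₂ ∈ P, l₁ ≠ l₂ → ∀ v ∈ l₁, v ∉ l₂

namespace VertexDisjoint

variable {α : Type*} [DecidableEq α] {P : Finset (List α)} {f : List α → List α}

theorem image_of_subset (hP : VertexDisjoint P) (hf : ∀ l ∈ P, f l ⊆ l) :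
    VertexDisjoint (P.image f) := by
  simp only [VertexDisjoint, Finset.forall_mem_image]
  intro l₁ h₁ l₂ h₂ hne v hv₁ hv₂
  exact hP l₁ h₁ l₂ h₂ (ne_of_apply_ne f hne) v (hf l₁ h₁ hv₁) (hf l₂ h₂ hv₂)

theorem card_image_of_subset (hP : VertexDisjoint P) (hf : ∀ l ∈ P, f l ⊆ l)
    (hne : ∀ l ∈ P, f l ≠ []) : (P.image f).card = P.card := by
  refine Finset.card_image_of_injOn fun l₁ h₁ l₂ h₂ heq => ?_
  by_contra hl
  obtain ⟨v, hv⟩ := List.exists_mem_of_ne_nil _ (hne l₁ h₁)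
  exact hP l₁ h₁ l₂ h₂ hl v (hf l₁ h₁ hv) (hf l₂ h₂ (heq ▸ hv))

end VertexDisjoint

theorem stmt7 {V : Type*} (r : V → V → Prop) (V1 V2 : Set V)
    (P : Finset (List V))
    (hpath : ∀ l ∈ P, IsPathFromTo r V1 V2 l)
    (hdisj : ∀ l₁ ∈ P, ∀ l₂ ∈ P, l₁ ≠ l₂ → ∀ v ∈ l₁, v ∉ l₂) :
    ∃ Pnew : Finset (List V),
      Pnew.card = P.card ∧
      (∀ l ∈ Pnew, IsPathFromTo r V1 V2 l) ∧
      (∀ l₁ ∈ Pnew, ∀ l₂ ∈ Pnew, l₁ ≠ l₂ → ∀ v ∈ l₁, v ∉ l₂) ∧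
      (∀ l ∈ Pnew, ∀ v ∈ l.tail.dropLast, v ∉ V1 ∪ V2) := by
  classical
  choose! f hf_infix hf_path hf_internal using
    fun l hl => (hpath l hl).exists_infix_tail_dropLast_not_mem
  have hf_sub : ∀ l ∈ P, f l ⊆ l := fun l hl => (hf_infix l hl).subset
  refine ⟨P.image f, VertexDisjoint.card_image_of_subset hdisj hf_sub
      (fun l hl => (hf_path l hl).1.1), ?_, VertexDisjoint.image_of_subset hdisj hf_sub, ?_⟩
  · simpa only [Finset.forall_mem_image] using hf_path
  · simpa only [Finset.forall_mem_image] using hf_internal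
end

section
/- Work over the field RatFunc ℝ of real rational functions; call a rational function proper if it is zero or has intDegree ≤ 0 (numerator degree at most denominator degree). Let the internal index set be S ⊕ D ⊕ P and the external column index set be Xs ⊕ Xd. Let G be a square matrix indexed by S ⊕ D ⊕ P and X a matrix with rows S ⊕ D ⊕ P and columns Xs ⊕ Xd, all of whose entries are proper, such that the block of G with rows in P and columns in S is zero and the block of X with rows in P and columns in Xs is zero. Assume I − G is invertible and that det(I − G_{P,P}) is nonzero with intDegree equal to 0 (well-posedness), where G_{P,P} is the P × P block of G. Set T := (I − G)⁻¹ · X. Then for every subset W̄ of D ⊕ P there exists a matrix K, with rows indexed by W̄ and columns indexed by D ⊕ Xd, all of whose entries are proper, such that the submatrix of T with rows W̄ equals K · M, where M is the (D ⊕ Xd) × (Xs ⊕ Xd) matrix whose top block (rows D) is the D-row submatrix of T and whose bottom block (rows Xd) is [0 , I] (zero on the Xs columns and the identity on the Xd columns). -/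
/-!
Proper rational functions form the valuation ring of the valuation at infinity, and a
determinant of degree zero is a unit of that ring; by the adjugate formula, a matrix with
proper entries and such a determinant has a proper inverse. Since `G_{P,S} = 0`, the `P`-rows
of `(I - G) T = X` read `(I - G_{P,P}) T_P = X_P + G_{P,D} T_D`, so with `E = I - G_{P,P}`
we get `T_P = E⁻¹ G_{P,D} T_D + E⁻¹ X_P`, and `E⁻¹ X_P = [0, E⁻¹ X_{P,Xd}]` because
`X_{P,Xs} = 0`. Together with `T_D = [I, 0] M` this writes the `D ⊕ P` rows of `T` as `K M`
with `K` proper; restricting to the rows in `W̄` gives the claim.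
-/

/-- A real rational function is proper if it is zero or its numerator degree is
at most its denominator degree. -/
def IsProper (f : RatFunc ℝ) : Prop := f = 0 ∨ f.intDegree ≤ 0

open Matrix

namespace Matrix

variable {l m n m₁ m₂ n₁ n₂ α : Type*}

theorem fromRows_mem_matrix {S : Set α} {A₁ : Matrix m₁ n α} {A₂ : Matrix m₂ n α}
    (h₁ : A₁ ∈ S.matrix) (h₂ : A₂ ∈ S.matrix) : fromRows A₁ A₂ ∈ S.matrix := by
  rintro (i | i) j
  exacts [h₁ i j, h₂ i j]

theorem fromCols_mem_matrix {S : Set α} {A₁ : Matrix m n₁ α} {A₂ : Matrix m n₂ α}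
    (h₁ : A₁ ∈ S.matrix) (h₂ : A₂ ∈ S.matrix) : fromCols A₁ A₂ ∈ S.matrix := by
  rintro i (j | j)
  exacts [h₁ i j, h₂ i j]

section Subring

variable {K : Type*} [CommRing K] {R : Subring K}

theorem zero_mem_matrix : (0 : Matrix m n K) ∈ (R : Set K).matrix :=
  fun _ _ => zero_mem R

theorem one_mem_matrix [DecidableEq n] : (1 : Matrix n n K) ∈ (R : Set K).matrix :=
  (diagonal_mem_matrix_iff (zero_mem R)).mpr fun _ => one_mem R

theorem mul_mem_matrix [Fintype m] {A : Matrix l m K} {B : Matrix m n K}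
    (hA : A ∈ (R : Set K).matrix) (hB : B ∈ (R : Set K).matrix) :
    A * B ∈ (R : Set K).matrix :=
  fun i j => sum_mem fun k _ => mul_mem (hA i k) (hB k j)

theorem adjugate_mem_matrix [Fintype n] [DecidableEq n] {A : Matrix n n K}
    (hA : A ∈ (R : Set K).matrix) : A.adjugate ∈ (R : Set K).matrix := by
  let A' : Matrix n n R := of fun i j => ⟨A i j, hA i j⟩
  have hlift : R.subtype.mapMatrix A' = A := rfl
  rw [← hlift, ← RingHom.map_adjugate]
  exact fun i j => (A'.adjugate i j).2

theorem nonsing_inv_mem_matrix [Fintype n] [DecidableEq n] {A : Matrix n n K}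
    (hA : A ∈ (R : Set K).matrix) (hdet : Ring.inverse A.det ∈ R) :
    A⁻¹ ∈ (R : Set K).matrix := by
  rw [inv_def]
  exact fun i j => mul_mem hdet (adjugate_mem_matrix hA i j)

end Subring

section DisconnectingSet

variable {S D P Xs Xd α : Type*} [Fintype D]

local notation "inP" => fun p => Sum.inr (Sum.inr p)
local notation "inD" => fun d => Sum.inr (Sum.inl d)

theorem one_sub_submatrix_mul_eq [Fintype S] [Fintype P] [Ring α]
    [DecidableEq S] [DecidableEq D] [DecidableEq P]
    (G : Matrix (S ⊕ D ⊕ P) (S ⊕ D ⊕ P) α) (T X : Matrix (S ⊕ D ⊕ P) n α)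
    (hT : (1 - G) * T = X) (hGPS : ∀ p s, G (Sum.inr (Sum.inr p)) (Sum.inl s) = 0) :
    (1 - G.submatrix inP inP) * T.submatrix inP id
      = X.submatrix inP id + G.submatrix inP inD * T.submatrix inD id := by
  rw [Matrix.sub_mul, Matrix.one_mul, sub_eq_iff_eq_add]
  rw [Matrix.sub_mul, Matrix.one_mul, sub_eq_iff_eq_add] at hT
  ext p j
  have hrow := congr_fun₂ hT (Sum.inr (Sum.inr p)) j
  simp only [add_apply, mul_apply, Fintype.sum_sum_type, hGPS, zero_mul,
    Finset.sum_const_zero, zero_add] at hrow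
  simp only [submatrix_apply, add_apply, mul_apply, id, hrow, add_assoc]

theorem fromRows_mul_add_fromCols_zero [DecidableEq D] [Fintype Xd] [DecidableEq Xd] [Semiring α]
    (TD : Matrix D (Xs ⊕ Xd) α) (A : Matrix P D α) (B : Matrix P Xd α) :
    fromRows TD (A * TD + fromCols 0 B)
      = fromRows (fromCols 1 0) (fromCols A B)
        * fromRows TD (fromCols (0 : Matrix Xd Xs α) (1 : Matrix Xd Xd α)) := by
  rw [fromRows_mul, fromCols_mul_fromRows, fromCols_mul_fromRows, Matrix.one_mul, Matrix.zero_mul,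
    add_zero, mul_fromCols, Matrix.mul_zero, Matrix.mul_one]

variable [Fintype S] [Fintype P] [CommRing α] [DecidableEq S] [DecidableEq D] [DecidableEq P]
  {G : Matrix (S ⊕ D ⊕ P) (S ⊕ D ⊕ P) α} {T X : Matrix (S ⊕ D ⊕ P) (Xs ⊕ Xd) α}

theorem submatrix_inr_inr_eq_of_one_sub_mul_eq (hT : (1 - G) * T = X)
    (hGPS : ∀ p s, G (Sum.inr (Sum.inr p)) (Sum.inl s) = 0)
    (hXPXs : ∀ p x, X (Sum.inr (Sum.inr p)) (Sum.inl x) = 0)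
    (hE : IsUnit (1 - G.submatrix inP inP).det) :
    T.submatrix inP id
      = (1 - G.submatrix inP inP)⁻¹ * G.submatrix inP inD * T.submatrix inD id
        + fromCols 0 ((1 - G.submatrix inP inP)⁻¹ * X.submatrix inP Sum.inr) := by
  have hXP : X.submatrix inP id = fromCols 0 (X.submatrix inP Sum.inr) := by
    ext p (x | x)
    exacts [hXPXs p x, rfl]
  set E := 1 - G.submatrix (inP : P → S ⊕ D ⊕ P) inP
  calc T.submatrix inP id = E⁻¹ * (E * T.submatrix inP id) := by
        rw [← Matrix.mul_assoc, nonsing_inv_mul _ hE, Matrix.one_mul]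
    _ = E⁻¹ * (fromCols 0 (X.submatrix inP Sum.inr)
          + G.submatrix inP inD * T.submatrix inD id) := by
        rw [one_sub_submatrix_mul_eq G T X hT hGPS, hXP]
    _ = _ := by
        rw [Matrix.mul_add, mul_fromCols, Matrix.mul_zero, Matrix.mul_assoc, add_comm]

theorem submatrix_inr_eq_mul_of_one_sub_mul_eq [Fintype Xd] [DecidableEq Xd]
    (hT : (1 - G) * T = X)
    (hGPS : ∀ p s, G (Sum.inr (Sum.inr p)) (Sum.inl s) = 0)
    (hXPXs : ∀ p x, X (Sum.inr (Sum.inr p)) (Sum.inl x) = 0)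
    (hE : IsUnit (1 - G.submatrix inP inP).det) :
    T.submatrix Sum.inr id
      = fromRows (fromCols 1 0) (fromCols ((1 - G.submatrix inP inP)⁻¹ * G.submatrix inP inD)
          ((1 - G.submatrix inP inP)⁻¹ * X.submatrix inP Sum.inr))
        * fromRows (T.submatrix inD id) (fromCols (0 : Matrix Xd Xs α) (1 : Matrix Xd Xd α)) := by
  rw [← fromRows_mul_add_fromCols_zero,
    ← submatrix_inr_inr_eq_of_one_sub_mul_eq hT hGPS hXPXs hE]
  exact (fromRows_toRows _).symm

end DisconnectingSet

end Matrix

open Classical in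
noncomputable def properSubring : Subring (RatFunc ℝ) := (RatFunc.inftyValuation ℝ).integer

theorem mem_properSubring {f : RatFunc ℝ} : f ∈ properSubring ↔ IsProper f := by
  classical
  rw [properSubring, Valuation.mem_integer_iff, IsProper]
  by_cases hf : f = 0
  · simp [hf]
  · rw [RatFunc.inftyValuation_apply, RatFunc.inftyValuation_of_nonzero ℝ hf,
      ← WithZero.exp_zero, WithZero.exp_le_exp]
    simp [hf]

theorem inv_mem_properSubring {f : RatFunc ℝ} (hf : f ≠ 0) (hdeg : f.intDegree = 0) :
    f⁻¹ ∈ properSubring := by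
  classical
  have hv : RatFunc.inftyValuation ℝ f = 1 := by
    rw [RatFunc.inftyValuation_apply, RatFunc.inftyValuation_of_nonzero ℝ hf, hdeg,
      WithZero.exp_zero]
  rw [properSubring, Valuation.mem_integer_iff, map_inv₀, hv, inv_one]

theorem nonsing_inv_mem_matrix_properSubring {n : Type*} [Fintype n] [DecidableEq n]
    {A : Matrix n n (RatFunc ℝ)} (hA : A ∈ (properSubring : Set (RatFunc ℝ)).matrix)
    (hdet : A.det ≠ 0) (hdeg : A.det.intDegree = 0) :
    A⁻¹ ∈ (properSubring : Set (RatFunc ℝ)).matrix := by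
  refine nonsing_inv_mem_matrix hA ?_
  rw [Ring.inverse_eq_inv']
  exact inv_mem_properSubring hdet hdeg

theorem stmt9_general {S D P Xs Xd : Type*}
    [Fintype S] [Fintype D] [Fintype P] [Fintype Xd]
    [DecidableEq S] [DecidableEq D] [DecidableEq P]
    [DecidableEq Xd]
    (G : Matrix (S ⊕ D ⊕ P) (S ⊕ D ⊕ P) (RatFunc ℝ))
    (X : Matrix (S ⊕ D ⊕ P) (Xs ⊕ Xd) (RatFunc ℝ))
    (hGproper : ∀ i j, IsProper (G i j))
    (hXproper : ∀ i j, IsProper (X i j))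
    (hGPS : ∀ (p : P) (s : S), G (Sum.inr (Sum.inr p)) (Sum.inl s) = 0)
    (hXPXs : ∀ (p : P) (x : Xs), X (Sum.inr (Sum.inr p)) (Sum.inl x) = 0)
    (hinv : IsUnit (1 - G))
    (hwpne : ((1 : Matrix P P (RatFunc ℝ))
        - G.submatrix (fun p => Sum.inr (Sum.inr p))
            (fun p => Sum.inr (Sum.inr p))).det ≠ 0)
    (hwpdeg : ((1 : Matrix P P (RatFunc ℝ))
        - G.submatrix (fun p => Sum.inr (Sum.inr p))
            (fun p => Sum.inr (Sum.inr p))).det.intDegree = 0) :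
    ∀ Wb : Finset (D ⊕ P),
      ∃ K : Matrix ↥Wb (D ⊕ Xd) (RatFunc ℝ),
        (∀ i j, IsProper (K i j)) ∧
        ((1 - G)⁻¹ * X).submatrix (fun i : ↥Wb => Sum.inr (i : D ⊕ P)) id
          = K * Matrix.fromRows
              (((1 - G)⁻¹ * X).submatrix (fun d : D => Sum.inr (Sum.inl d)) id)
              (Matrix.fromCols (0 : Matrix Xd Xs (RatFunc ℝ))
                (1 : Matrix Xd Xd (RatFunc ℝ))) := by
  intro Wb
  have hT : (1 - G) * ((1 - G)⁻¹ * X) = X :=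
    mul_nonsing_inv_cancel_left _ X ((isUnit_iff_isUnit_det _).mp hinv)
  have hfactor := congrArg (fun M => M.submatrix (Subtype.val : Wb → D ⊕ P) id)
    (submatrix_inr_eq_mul_of_one_sub_mul_eq hT hGPS hXPXs (isUnit_iff_ne_zero.mpr hwpne))
  refine ⟨_, fun i j => mem_properSubring.mp (submatrix_mem_matrix ?_ i j),
    hfactor.trans (submatrix_mul _ _ _ id id Function.bijective_id)⟩
  have hG : G ∈ (properSubring : Set (RatFunc ℝ)).matrix :=
    fun i j => mem_properSubring.mpr (hGproper i j)
  have hX : X ∈ (properSubring : Set (RatFunc ℝ)).matrix :=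
    fun i j => mem_properSubring.mpr (hXproper i j)
  have hEinv := nonsing_inv_mem_matrix_properSubring
    (fun i j => sub_mem (one_mem_matrix i j) (submatrix_mem_matrix hG i j)) hwpne hwpdeg
  exact fromRows_mem_matrix (fromCols_mem_matrix one_mem_matrix zero_mem_matrix)
    (fromCols_mem_matrix (mul_mem_matrix hEinv (submatrix_mem_matrix hG))
      (mul_mem_matrix hEinv (submatrix_mem_matrix hX)))

/-- Disconnecting-set factorization (algebraic form): if the `(P, S)` block of
`G` and the `(P, Xs)` block of `X` vanish, all entries are proper, `I - G` is
invertible and the network is well-posed, then for every subset `W̄` of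
`D ⊕ P` the `W̄`-row submatrix of `T = (I - G)⁻¹ X` factors as `K * M` with
`K` proper, where `M` stacks the `D`-rows of `T` on top of `[0, I]`. -/
theorem stmt9 {S D P Xs Xd : Type*}
    [Fintype S] [Fintype D] [Fintype P] [Fintype Xs] [Fintype Xd]
    [DecidableEq S] [DecidableEq D] [DecidableEq P]
    [DecidableEq Xs] [DecidableEq Xd]
    (G : Matrix (S ⊕ D ⊕ P) (S ⊕ D ⊕ P) (RatFunc ℝ))
    (X : Matrix (S ⊕ D ⊕ P) (Xs ⊕ Xd) (RatFunc ℝ))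
    (hGproper : ∀ i j, IsProper (G i j))
    (hXproper : ∀ i j, IsProper (X i j))
    (hGPS : ∀ (p : P) (s : S), G (Sum.inr (Sum.inr p)) (Sum.inl s) = 0)
    (hXPXs : ∀ (p : P) (x : Xs), X (Sum.inr (Sum.inr p)) (Sum.inl x) = 0)
    (hinv : IsUnit (1 - G))
    (hwpne : ((1 : Matrix P P (RatFunc ℝ))
        - G.submatrix (fun p => Sum.inr (Sum.inr p))
            (fun p => Sum.inr (Sum.inr p))).det ≠ 0)
    (hwpdeg : ((1 : Matrix P P (RatFunc ℝ))
        - G.submatrix (fun p => Sum.inr (Sum.inr p))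
            (fun p => Sum.inr (Sum.inr p))).det.intDegree = 0) :
    ∀ Wb : Finset (D ⊕ P),
      ∃ K : Matrix ↥Wb (D ⊕ Xd) (RatFunc ℝ),
        (∀ i j, IsProper (K i j)) ∧
        ((1 - G)⁻¹ * X).submatrix (fun i : ↥Wb => Sum.inr (i : D ⊕ P)) id
          = K * Matrix.fromRows
              (((1 - G)⁻¹ * X).submatrix (fun d : D => Sum.inr (Sum.inl d)) id)
              (Matrix.fromCols (0 : Matrix Xd Xs (RatFunc ℝ))
                (1 : Matrix Xd Xd (RatFunc ℝ))) :=
  stmt9_general G X hGproper hXproper hGPS hXPXs hinv hwpne hwpdeg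
end

section
/- Let F be a field, let the row index set be S ⊕ D ⊕ P and the column index set be Xs ⊕ Xd. Let G be a square matrix indexed by S ⊕ D ⊕ P with its (P rows, S columns) block equal to zero, and X a matrix with rows S ⊕ D ⊕ P and columns Xs ⊕ Xd with its (P rows, Xs columns) block equal to zero. Assume I − G is invertible and I − G_{P,P} is invertible, where G_{P,P} is the P × P block of G, and set T := (I − G)⁻¹ · X. Then T_{P,Xs} = (I − G_{P,P})⁻¹ · G_{P,D} · T_{D,Xs}, where G_{P,D} is the block of G with rows P and columns D, and T_{P,Xs}, T_{D,Xs} are the corresponding blocks of T. -/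
/-- With the `(P, S)` block of `G` and the `(P, Xs)` block of `X` vanishing,
and `I - G`, `I - G_{P,P}` invertible, the transfer matrix
`T = (I - G)⁻¹ * X` satisfies
`T_{P,Xs} = (I - G_{P,P})⁻¹ * G_{P,D} * T_{D,Xs}`. -/
theorem stmt10 {F : Type*} [Field F] {S D P Xs Xd : Type*}
    [Fintype S] [Fintype D] [Fintype P] [Fintype Xs] [Fintype Xd]
    [DecidableEq S] [DecidableEq D] [DecidableEq P]
    (G : Matrix (S ⊕ D ⊕ P) (S ⊕ D ⊕ P) F)
    (X : Matrix (S ⊕ D ⊕ P) (Xs ⊕ Xd) F)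
    (hGPS : ∀ (p : P) (s : S), G (Sum.inr (Sum.inr p)) (Sum.inl s) = 0)
    (hXPXs : ∀ (p : P) (x : Xs), X (Sum.inr (Sum.inr p)) (Sum.inl x) = 0)
    (hinv : IsUnit (1 - G))
    (hinvP : IsUnit ((1 : Matrix P P F)
      - G.submatrix (fun p => Sum.inr (Sum.inr p)) (fun p => Sum.inr (Sum.inr p)))) :
    ((1 - G)⁻¹ * X).submatrix (fun p : P => Sum.inr (Sum.inr p)) Sum.inl
      = ((1 : Matrix P P F)
          - G.submatrix (fun p => Sum.inr (Sum.inr p))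
              (fun p => Sum.inr (Sum.inr p)))⁻¹
        * G.submatrix (fun p : P => Sum.inr (Sum.inr p))
            (fun d : D => Sum.inr (Sum.inl d))
        * ((1 - G)⁻¹ * X).submatrix (fun d : D => Sum.inr (Sum.inl d)) Sum.inl := by
  set T : Matrix (S ⊕ D ⊕ P) (Xs ⊕ Xd) F := (1 - G)⁻¹ * X with hT
  have hdet : IsUnit (1 - G).det := (Matrix.isUnit_iff_isUnit_det _).mp hinv
  have hdetP : IsUnit ((1 : Matrix P P F)
      - G.submatrix (fun p => Sum.inr (Sum.inr p)) (fun p => Sum.inr (Sum.inr p))).det :=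
    (Matrix.isUnit_iff_isUnit_det _).mp hinvP
  have hAT : (1 - G) * T = X := by
    rw [hT, ← Matrix.mul_assoc, Matrix.mul_nonsing_inv _ hdet, Matrix.one_mul]
  have hkey : ((1 : Matrix P P F)
        - G.submatrix (fun p => Sum.inr (Sum.inr p)) (fun p => Sum.inr (Sum.inr p)))
      * T.submatrix (fun p : P => Sum.inr (Sum.inr p)) Sum.inl
      = G.submatrix (fun p : P => Sum.inr (Sum.inr p)) (fun d : D => Sum.inr (Sum.inl d))
      * T.submatrix (fun d : D => Sum.inr (Sum.inl d)) Sum.inl := by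
    ext p x
    have h0 := congrFun (congrFun hAT (Sum.inr (Sum.inr p))) (Sum.inl x)
    rw [hXPXs p x] at h0
    rw [Matrix.mul_apply] at h0
    simp only [Fintype.sum_sum_type, Matrix.sub_apply, Matrix.one_apply, hGPS,
      reduceCtorEq, if_false, zero_sub, neg_mul, zero_mul, neg_zero,
      Finset.sum_const_zero, zero_add, Sum.inr.injEq, Sum.inl.injEq, sub_mul, ite_mul,
      one_mul, Finset.sum_sub_distrib, Finset.sum_ite_eq, Finset.mem_univ, if_true,
      Finset.sum_neg_distrib] at h0
    simp only [Matrix.mul_apply, Matrix.sub_apply, Matrix.one_apply, Matrix.submatrix_apply,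
      sub_mul, ite_mul, one_mul, zero_mul, Finset.sum_sub_distrib, Finset.sum_ite_eq,
      Finset.mem_univ, if_true]
    linear_combination h0
  calc T.submatrix (fun p : P => Sum.inr (Sum.inr p)) Sum.inl
      = (((1 : Matrix P P F)
          - G.submatrix (fun p => Sum.inr (Sum.inr p)) (fun p => Sum.inr (Sum.inr p)))⁻¹
        * ((1 : Matrix P P F)
          - G.submatrix (fun p => Sum.inr (Sum.inr p)) (fun p => Sum.inr (Sum.inr p))))
        * T.submatrix (fun p : P => Sum.inr (Sum.inr p)) Sum.inl := by
        rw [Matrix.nonsing_inv_mul _ hdetP, Matrix.one_mul]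
    _ = _ := by rw [Matrix.mul_assoc, hkey, ← Matrix.mul_assoc]
end

section
/- Let r be a directed graph on a vertex type V, let w_i ≠ w_j be vertices with r w_i w_j and ¬ r w_j w_j, and let N⁻(w_j) := { v | r v w_j } be the set of in-neighbors of w_j. Then for every vertex set D with w_i ∉ D, the following are equivalent: (a) D is a {w_i}–(N⁻(w_j) ∖ {w_i}) disconnecting set; (b) D contains an internal vertex of every parallel path from w_i to w_j, and D contains a vertex of every loop through w_j that does not pass through w_i. -/
/-- `D` is a `V1`–`V2` disconnecting set: every path from `V1` to `V2`
contains a vertex of `D`. -/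
def Disconnects {V : Type*} (r : V → V → Prop) (V1 V2 D : Set V) : Prop :=
  ∀ l : List V, IsPathFromTo r V1 V2 l → ∃ v ∈ D, v ∈ l

/-- A loop through `wj` with (nonempty) list `m` of intermediate vertices:
the list `wj :: m ++ [wj]` is a chain for `r`, and the vertices `wj :: m`
are pairwise distinct.  Its vertices are the entries of `wj :: m`. -/
def IsLoopThrough {V : Type*} (r : V → V → Prop) (wj : V) (m : List V) : Prop :=
  m ≠ [] ∧ (wj :: m).Nodup ∧ (wj :: (m ++ [wj])).Chain' r

/-!
A path from `wi` to an in-neighbour `v ≠ wi` of `wj` either avoids `wj`, and then appending `wj`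
gives a parallel path whose internal vertices are those of the path after `wi`; or it meets `wj`,
and then its segment from `wj` on, closed by the edge `v → wj`, is a loop through `wj` avoiding
`wi` (it has an intermediate vertex because `wj` has no self-loop). Conversely, a parallel path
minus its last vertex, and `wi` followed by such a loop, are paths from `wi` to
`N⁻(wj) ∖ {wi}`; as `wi ∉ D`, the vertex of `D` they contain is not `wi`.
-/
section

variable {V : Type*} {r : V → V → Prop}

lemma isPath_iff {l : List V} : IsPath r l ↔ l ≠ [] ∧ l.Nodup ∧ l.IsChain r := Iff.rfl

lemma isLoopThrough_iff_isChain {w : V} {m : List V} :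
    IsLoopThrough r w m ↔ m ≠ [] ∧ (w :: m).Nodup ∧ ((w :: m) ++ [w]).IsChain r := Iff.rfl

lemma isPath_cons_iff {a : V} {l : List V} (hl : l ≠ []) :
    IsPath r (a :: l) ↔ IsPath r l ∧ a ∉ l ∧ r a (l.head hl) := by
  obtain ⟨b, l, rfl⟩ := List.exists_cons_of_ne_nil hl
  simp only [isPath_iff, List.nodup_cons, List.isChain_cons_cons, List.head_cons]
  grind

lemma isPath_concat_iff {l : List V} {v : V} (hl : l ≠ []) :
    IsPath r (l ++ [v]) ↔ IsPath r l ∧ v ∉ l ∧ r (l.getLast hl) v := by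
  simp only [isPath_iff, List.nodup_append, List.isChain_append, List.getLast?_eq_some_getLast hl,
    List.nodup_singleton, List.isChain_singleton, List.mem_singleton, List.head?_cons,
    Option.mem_def, Option.some.injEq, forall_eq', ne_eq, List.append_eq_nil_iff, hl]
  grind

lemma isLoopThrough_iff {w : V} {m : List V} :
    IsLoopThrough r w m ↔ ∃ hm : m ≠ [], IsPath r (w :: m) ∧ r (m.getLast hm) w := by
  simp only [isLoopThrough_iff_isChain, isPath_iff, List.isChain_append,
    List.getLast?_eq_some_getLast (List.cons_ne_nil w m), List.isChain_singleton, List.head?_cons,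
    Option.mem_def, Option.some.injEq, forall_eq', ne_eq, reduceCtorEq, not_false_eq_true, true_and]
  constructor
  · rintro ⟨hm, hnd, hch, hr⟩
    exact ⟨hm, ⟨hnd, hch⟩, by rwa [List.getLast_cons hm] at hr⟩
  · rintro ⟨hm, ⟨hnd, hch⟩, hr⟩
    exact ⟨hm, hnd, hch, by rwa [List.getLast_cons hm]⟩

lemma isPathFromTo_singleton_iff {a : V} {T : Set V} {l : List V} :
    IsPathFromTo r {a} T l ↔
      ∃ t, l = a :: t ∧ IsPath r (a :: t) ∧
        (a :: t).getLast (List.cons_ne_nil a t) ∈ T := by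
  constructor
  · rintro ⟨hp, hends⟩
    obtain ⟨b, t, rfl⟩ := List.exists_cons_of_ne_nil hp.1
    obtain ⟨rfl, hT⟩ := hends hp.1
    exact ⟨t, rfl, hp, hT⟩
  · rintro ⟨t, rfl, hp, hT⟩
    exact ⟨hp, fun _ => ⟨rfl, hT⟩⟩

lemma IsPath.suffix {l l' : List V} (hl : IsPath r l) (h : l' <:+ l) (hl' : l' ≠ []) :
    IsPath r l' :=
  ⟨hl', hl.2.1.sublist h.sublist, hl.2.2.suffix h⟩

lemma IsPath.getLast_ne_head {a : V} {s : List V} (hp : IsPath r (a :: s)) (hs : s ≠ []) :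
    (a :: s).getLast (List.cons_ne_nil a s) ≠ a := by
  rw [List.getLast_cons hs]
  rintro h
  exact (List.nodup_cons.mp hp.2.1).1 (h ▸ List.getLast_mem hs)

lemma exists_mem_of_exists_mem_cons {D : Set V} {a : V} {s : List V} (ha : a ∉ D)
    (h : ∃ v ∈ D, v ∈ a :: s) : ∃ v ∈ D, v ∈ s := by
  obtain ⟨v, hvD, hv⟩ := h
  exact ⟨v, hvD, (List.mem_cons.mp hv).resolve_left (by rintro rfl; exact ha hvD)⟩

variable {wi wj : V} {D : Set V}

lemma Disconnects.exists_mem_internal_of_parallel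
    (hD : Disconnects r {wi} ({v | r v wj} \ {wi}) D) (hwiD : wi ∉ D) (hne : wi ≠ wj)
    {l : List V} (hl : IsPathFromTo r {wi} {wj} l) (hpar : l ≠ [wi, wj]) :
    ∃ v ∈ D, v ∈ l.tail.dropLast := by
  obtain ⟨t, rfl, hp, hlast⟩ := isPathFromTo_singleton_iff.mp hl
  have ht : t ≠ [] := by rintro rfl; exact hne hlast
  rw [List.getLast_cons ht, Set.mem_singleton_iff] at hlast
  obtain ⟨s, rfl⟩ : ∃ s, t = s ++ [wj] :=
    ⟨t.dropLast, by rw [← hlast, List.dropLast_append_getLast]⟩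
  have hs : s ≠ [] := by rintro rfl; exact hpar rfl
  rw [← List.cons_append, isPath_concat_iff (List.cons_ne_nil _ _)] at hp
  obtain ⟨hp, -, hr⟩ := hp
  have hs_path : IsPathFromTo r {wi} ({v | r v wj} \ {wi}) (wi :: s) :=
    isPathFromTo_singleton_iff.mpr ⟨s, rfl, hp, hr, hp.getLast_ne_head hs⟩
  simpa using exists_mem_of_exists_mem_cons hwiD (hD _ hs_path)

lemma Disconnects.exists_mem_of_isLoopThrough
    (hD : Disconnects r {wi} ({v | r v wj} \ {wi}) D) (hwiD : wi ∉ D) (hedge : r wi wj)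
    {m : List V} (hm : IsLoopThrough r wj m) (hwi : wi ∉ wj :: m) :
    ∃ v ∈ D, v ∈ wj :: m := by
  obtain ⟨hm, hpm, hr⟩ := isLoopThrough_iff.mp hm
  have hp : IsPath r (wi :: wj :: m) :=
    (isPath_cons_iff (List.cons_ne_nil _ _)).mpr ⟨hpm, hwi, hedge⟩
  have hlast : (wi :: wj :: m).getLast (List.cons_ne_nil _ _) = m.getLast hm := by
    rw [List.getLast_cons (List.cons_ne_nil _ _), List.getLast_cons hm]
  refine exists_mem_of_exists_mem_cons hwiD (hD _ (isPathFromTo_singleton_iff.mpr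
    ⟨_, rfl, hp, ?_, hp.getLast_ne_head (List.cons_ne_nil _ _)⟩))
  rw [hlast]
  exact hr

lemma disconnects_of_forall_parallel_of_forall_loop (hne : wi ≠ wj) (hnoself : ¬ r wj wj)
    (hpar : ∀ l : List V, IsPathFromTo r {wi} {wj} l → l ≠ [wi, wj] →
      ∃ v ∈ D, v ∈ l.tail.dropLast)
    (hloop : ∀ m : List V, IsLoopThrough r wj m → wi ∉ wj :: m →
      ∃ v ∈ D, v ∈ wj :: m) :
    Disconnects r {wi} ({v | r v wj} \ {wi}) D := by
  intro l hl
  obtain ⟨t, rfl, hp, hr, hlast⟩ := isPathFromTo_singleton_iff.mp hl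
  have ht : t ≠ [] := by rintro rfl; exact hlast rfl
  rw [List.getLast_cons ht] at hr hlast
  by_cases hwj : wj ∈ t
  · obtain ⟨s, m, rfl⟩ := List.append_of_mem hwj
    have hm : m ≠ [] := by rintro rfl; exact hnoself (by simpa using hr)
    have hsuffix : wj :: m <:+ s ++ wj :: m := List.suffix_append s _
    have hwi : wi ∉ wj :: m := fun h => (List.nodup_cons.mp hp.2.1).1 (hsuffix.subset h)
    have hr : r (m.getLast hm) wj := by
      simpa [List.getLast_append, List.getLast_cons hm] using hr
    have hpm : IsPath r (wj :: m) :=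
      hp.suffix (hsuffix.trans (List.suffix_cons wi _)) (List.cons_ne_nil _ _)
    obtain ⟨d, hdD, hd⟩ := hloop m (isLoopThrough_iff.mpr ⟨hm, hpm, hr⟩) hwi
    exact ⟨d, hdD, List.mem_cons_of_mem _ (List.mem_append_right _ hd)⟩
  · have hp : IsPath r ((wi :: t) ++ [wj]) :=
      (isPath_concat_iff (List.cons_ne_nil _ _)).mpr
        ⟨hp, by simp [hne.symm, hwj], by rwa [List.getLast_cons ht]⟩
    have hpar_ne : (wi :: t) ++ [wj] ≠ [wi, wj] := by simpa using ht
    obtain ⟨d, hdD, hd⟩ := hpar _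
      (isPathFromTo_singleton_iff.mpr ⟨t ++ [wj], rfl, hp, by simp⟩) hpar_ne
    exact ⟨d, hdD, List.mem_cons_of_mem _ (by simpa using hd)⟩

end

theorem stmt11 {V : Type*} (r : V → V → Prop) (wi wj : V)
    (hne : wi ≠ wj) (hedge : r wi wj) (hnoself : ¬ r wj wj)
    (D : Set V) (hwiD : wi ∉ D) :
    Disconnects r {wi} ({v | r v wj} \ {wi}) D ↔
      ((∀ l : List V, IsPathFromTo r {wi} {wj} l → l ≠ [wi, wj] →
          ∃ v ∈ D, v ∈ l.tail.dropLast) ∧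
       (∀ m : List V, IsLoopThrough r wj m → wi ∉ wj :: m →
          ∃ v ∈ D, v ∈ wj :: m)) :=
  ⟨fun hD => ⟨fun _ hl hpar => hD.exists_mem_internal_of_parallel hwiD hne hl hpar,
      fun _ hm hwi => hD.exists_mem_of_isLoopThrough hwiD hedge hm hwi⟩,
    fun ⟨hpar, hloop⟩ => disconnects_of_forall_parallel_of_forall_loop hne hnoself hpar hloop⟩
end

section
/- Let r be a directed graph on a finite vertex type V, let W̄, X̄, V2 be vertex sets with W̄ disjoint from V2 and from X̄, and let N⁺(W̄) := { v | ∃ w ∈ W̄, r w v } be the set of out-neighbors of W̄. Then a vertex set D is of minimum cardinality among all (W̄ ∪ X̄)–V2 disconnecting sets satisfying D ∩ W̄ = ∅ if and only if D is of minimum cardinality among all (N⁺(W̄) ∪ X̄)–V2 disconnecting sets. -/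
/-!
A path from `W̄` to `V₂` continues after its first vertex as a path from `N⁺(W̄)` (it cannot end
in `W̄`), and a path from `N⁺(w)` either passes through `w` or extends backwards by `w`; so a set
avoiding `W̄` disconnects `W̄ ∪ X̄` from `V₂` iff it disconnects `N⁺(W̄) ∪ X̄` from `V₂`. Deleting
`W̄` from an `(N⁺(W̄) ∪ X̄)`–`V₂` disconnecting set keeps it disconnecting, since the part of a
path after a vertex of `W̄` is a shorter path from `N⁺(W̄)`. Hence every disconnecting set of the
second kind contains one of the first kind, and the two minimisation problems have the same
minimisers.
-/

def IsMinCard {V : Type*} (P : Set V → Prop) (D : Set V) : Prop :=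
  P D ∧ ∀ D', P D' → D.ncard ≤ D'.ncard

theorem isMinCard_iff_of_imp_of_exists_subset {V : Type*} [Finite V] {P Q : Set V → Prop}
    (hPQ : ∀ D, P D → Q D) (hQP : ∀ D, Q D → ∃ D' ⊆ D, P D') {D : Set V} :
    IsMinCard P D ↔ IsMinCard Q D := by
  constructor
  · rintro ⟨hD, hmin⟩
    refine ⟨hPQ D hD, fun D' hD' => ?_⟩
    obtain ⟨D'', hsub, hD''⟩ := hQP D' hD'
    exact (hmin D'' hD'').trans (Set.ncard_le_ncard hsub)
  · rintro ⟨hD, hmin⟩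
    obtain ⟨D', hsub, hD'⟩ := hQP D hD
    have hD'_eq : D' = D := Set.eq_of_subset_of_ncard_le hsub (hmin D' (hPQ D' hD'))
    exact ⟨hD'_eq ▸ hD', fun D'' hD'' => hmin D'' (hPQ D'' hD'')⟩

def outNeighbors {V : Type*} (r : V → V → Prop) (W : Set V) : Set V :=
  {v | ∃ w ∈ W, r w v}

namespace IsPathFromTo

variable {V : Type*} {r : V → V → Prop} {A A' B : Set V} {l t : List V} {v : V}

theorem ne_nil (h : IsPathFromTo r A B l) : l ≠ [] :=
  h.1.1

theorem of_head_mem (h : IsPathFromTo r A B l) (hA' : ∀ hne : l ≠ [], l.head hne ∈ A') :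
    IsPathFromTo r A' B l :=
  ⟨h.1, fun hne => ⟨hA' hne, (h.2 hne).2⟩⟩

theorem tail_of_cons (h : IsPathFromTo r A B (v :: t)) (hvB : v ∉ B)
    (hA' : ∀ u, r v u → u ∈ A') : IsPathFromTo r A' B t := by
  obtain ⟨⟨-, hnd, hch⟩, hends⟩ := h
  obtain ⟨-, hlast⟩ := hends (List.cons_ne_nil v t)
  obtain _ | ⟨u, t⟩ := t
  · exact absurd hlast hvB
  · rw [List.getLast_cons (List.cons_ne_nil u t)] at hlast
    obtain ⟨hvu, hch⟩ := List.isChain_cons_cons.mp hch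
    exact ⟨⟨List.cons_ne_nil u t, (List.nodup_cons.mp hnd).2, hch⟩, fun _ => ⟨hA' u hvu, hlast⟩⟩

theorem cons (h : IsPathFromTo r A B l) (hvl : v ∉ l) (hv : ∀ u ∈ l.head?, r v u)
    (hvA' : v ∈ A') : IsPathFromTo r A' B (v :: l) := by
  obtain ⟨⟨hne, hnd, hch⟩, hends⟩ := h
  refine ⟨⟨List.cons_ne_nil v l, List.nodup_cons.mpr ⟨hvl, hnd⟩, List.isChain_cons.mpr ⟨hv, hch⟩⟩,
    fun _ => ⟨hvA', ?_⟩⟩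
  rw [List.getLast_cons hne]
  exact (hends hne).2

theorem exists_suffix (h : IsPathFromTo r A B l) (hvl : v ∈ l) (hvA' : v ∈ A') :
    ∃ t, v :: t <:+ l ∧ IsPathFromTo r A' B (v :: t) := by
  obtain ⟨s, t, rfl⟩ := List.append_of_mem hvl
  obtain ⟨⟨hne, hnd, hch⟩, hends⟩ := h
  have hsuf := List.suffix_append s (v :: t)
  refine ⟨t, hsuf, ⟨List.cons_ne_nil v t, hnd.sublist hsuf.sublist, hch.suffix hsuf⟩,
    fun _ => ⟨hvA', ?_⟩⟩
  rw [← List.getLast_append_of_ne_nil hne]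
  exact (hends hne).2

end IsPathFromTo

namespace Disconnects

variable {V : Type*} {r : V → V → Prop} {W X B D : Set V}

theorem of_outNeighbors (hWB : Disjoint W B) (hD : Disconnects r (outNeighbors r W ∪ X) B D) :
    Disconnects r (W ∪ X) B D := by
  intro l hl
  obtain ⟨v, t, rfl⟩ := List.exists_cons_of_ne_nil hl.ne_nil
  rcases (hl.2 (List.cons_ne_nil v t)).1 with hvW | hvX
  · obtain ⟨x, hxD, hxt⟩ := hD t <|
      hl.tail_of_cons (hWB.notMem_of_mem_left hvW) fun u hvu => Or.inl ⟨v, hvW, hvu⟩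
    exact ⟨x, hxD, List.mem_cons_of_mem v hxt⟩
  · exact hD _ (hl.of_head_mem fun _ => Or.inr hvX)

theorem outNeighbors_of_disjoint (hD : Disconnects r (W ∪ X) B D) (hDW : Disjoint D W) :
    Disconnects r (outNeighbors r W ∪ X) B D := by
  intro l hl
  obtain ⟨u, t, rfl⟩ := List.exists_cons_of_ne_nil hl.ne_nil
  rcases (hl.2 (List.cons_ne_nil u t)).1 with ⟨w, hwW, hwu⟩ | huX
  · by_cases hwl : w ∈ u :: t
    · obtain ⟨t', hsuf, ht'⟩ := hl.exists_suffix hwl (Set.mem_union_left X hwW)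
      obtain ⟨x, hxD, hxt'⟩ := hD _ ht'
      exact ⟨x, hxD, hsuf.subset hxt'⟩
    · obtain ⟨x, hxD, hx⟩ := hD _ (hl.cons hwl (by simpa using hwu) (Or.inl hwW))
      rcases List.mem_cons.mp hx with rfl | hxl
      · exact absurd hwW (hDW.notMem_of_mem_left hxD)
      · exact ⟨x, hxD, hxl⟩
  · exact hD _ (hl.of_head_mem fun _ => Or.inr huX)

theorem diff_of_outNeighbors (hWB : Disjoint W B)
    (hD : Disconnects r (outNeighbors r W ∪ X) B D) :
    Disconnects r (outNeighbors r W ∪ X) B (D \ W) := by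
  intro l
  induction hn : l.length using Nat.strong_induction_on generalizing l with
  | _ n ih =>
    intro hl
    obtain ⟨v, hvD, hvl⟩ := hD l hl
    by_cases hvW : v ∈ W
    · obtain ⟨t, hsuf, ht⟩ := hl.exists_suffix hvl (Set.mem_univ v)
      obtain ⟨x, hx, hxt⟩ := ih t.length (hn ▸ hsuf.length_le) t rfl <|
        ht.tail_of_cons (hWB.notMem_of_mem_left hvW) fun u hvu => Or.inl ⟨v, hvW, hvu⟩
      exact ⟨x, hx, hsuf.subset (List.mem_cons_of_mem v hxt)⟩
    · exact ⟨v, ⟨hvD, hvW⟩, hvl⟩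

end Disconnects

theorem stmt13_general {V : Type*} [Fintype V] (r : V → V → Prop) (Wb Xb V2 : Set V)
    (hWV2 : Disjoint Wb V2) (D : Set V) :
    (Disconnects r (Wb ∪ Xb) V2 D ∧ D ∩ Wb = ∅ ∧
        ∀ D' : Set V, Disconnects r (Wb ∪ Xb) V2 D' → D' ∩ Wb = ∅ →
          D.ncard ≤ D'.ncard) ↔
      (Disconnects r ({v | ∃ w ∈ Wb, r w v} ∪ Xb) V2 D ∧
        ∀ D' : Set V, Disconnects r ({v | ∃ w ∈ Wb, r w v} ∪ Xb) V2 D' →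
          D.ncard ≤ D'.ncard) := by
  have key := isMinCard_iff_of_imp_of_exists_subset (D := D)
    (P := fun D => Disconnects r (Wb ∪ Xb) V2 D ∧ D ∩ Wb = ∅)
    (Q := Disconnects r (outNeighbors r Wb ∪ Xb) V2)
    (fun D hD => hD.1.outNeighbors_of_disjoint (Set.disjoint_iff_inter_eq_empty.mpr hD.2))
    (fun D hD => ⟨D \ Wb, Set.sdiff_subset,
      (hD.diff_of_outNeighbors hWV2).of_outNeighbors hWV2, Set.sdiff_inter_self⟩)
  simp only [IsMinCard, and_assoc, and_imp] at key
  exact key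

theorem stmt13 {V : Type*} [Fintype V] (r : V → V → Prop) (Wb Xb V2 : Set V)
    (hWV2 : Disjoint Wb V2) (hWX : Disjoint Wb Xb) (D : Set V) :
    (Disconnects r (Wb ∪ Xb) V2 D ∧ D ∩ Wb = ∅ ∧
        ∀ D' : Set V, Disconnects r (Wb ∪ Xb) V2 D' → D' ∩ Wb = ∅ →
          D.ncard ≤ D'.ncard) ↔
      (Disconnects r ({v | ∃ w ∈ Wb, r w v} ∪ Xb) V2 D ∧
        ∀ D' : Set V, Disconnects r ({v | ∃ w ∈ Wb, r w v} ∪ Xb) V2 D' →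
          D.ncard ≤ D'.ncard) :=
  stmt13_general r Wb Xb V2 hWV2 D
end

section
/- Let r be a directed graph on a finite vertex type V, and let X̄, W̄, V2, D be vertex sets such that there exists a set of |D| + |W̄| pairwise vertex-disjoint paths from X̄ to W̄ ∪ D (i.e. b(X̄ → W̄ ∪ D) = |D| + |W̄|). Then D is an X̄–V2 disconnecting set if and only if D is a (W̄ ∪ X̄)–V2 disconnecting set and D ∩ W̄ = ∅. -/
section

variable {V : Type*} {r : V → V → Prop}

theorem exists_isPath_subset_of_isChain {l : List V} (hne : l ≠ []) (hc : l.IsChain r) :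
    ∃ m, IsPath r m ∧ m.head? = l.head? ∧ m.getLast? = l.getLast? ∧ m ⊆ l := by
  induction l with
  | nil => exact absurd rfl hne
  | cons a t ih =>
    rcases t with _ | ⟨b, t⟩
    · exact ⟨[a], ⟨List.cons_ne_nil _ _, List.nodup_singleton a, List.isChain_singleton a⟩,
        rfl, rfl, List.Subset.refl _⟩
    obtain ⟨hab, hc⟩ := List.isChain_cons_cons.1 hc
    obtain ⟨m, ⟨hmne, hmnd, hmc⟩, hhead, hlast, hsub⟩ := ih (List.cons_ne_nil _ _) hc
    by_cases ha : a ∈ m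
    · -- `a` already occurs later: cut out the cycle through it
      obtain ⟨u, s, rfl⟩ := List.append_of_mem ha
      have hsuf : (a :: s) <:+ u ++ a :: s := List.suffix_append u _
      refine ⟨a :: s, ⟨List.cons_ne_nil _ _, hmnd.sublist hsuf.sublist, hmc.suffix hsuf⟩, rfl,
        ?_, List.subset_cons_of_subset a (List.Subset.trans hsuf.subset hsub)⟩
      rw [List.getLast?_cons_cons, ← hlast, List.getLast?_append_of_ne_nil _ (List.cons_ne_nil _ _)]
    · obtain ⟨c, m, rfl⟩ := List.exists_cons_of_ne_nil hmne
      obtain rfl : c = b := by simpa using hhead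
      exact ⟨a :: c :: m, ⟨List.cons_ne_nil _ _, List.nodup_cons.2 ⟨ha, hmnd⟩,
        List.isChain_cons_cons.2 ⟨hab, hmc⟩⟩, rfl, by simpa using hlast,
        List.cons_subset_cons _ hsub⟩

theorem exists_isPathFromTo_subset_of_isChain {V1 V2 : Set V} {l : List V} (hne : l ≠ [])
    (hc : l.IsChain r) (hhead : l.head hne ∈ V1) (hlast : l.getLast hne ∈ V2) :
    ∃ m, IsPathFromTo r V1 V2 m ∧ m ⊆ l := by
  obtain ⟨m, hm, hmhead, hmlast, hsub⟩ := exists_isPath_subset_of_isChain hne hc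
  refine ⟨m, ⟨hm, fun hmne => ⟨?_, ?_⟩⟩, hsub⟩
  · have : m.head hmne = l.head hne := by
      simpa [List.head?_eq_some_head hmne, List.head?_eq_some_head hne] using hmhead
    rwa [this]
  · have : m.getLast hmne = l.getLast hne := by
      simpa [List.getLast?_eq_some_getLast hmne, List.getLast?_eq_some_getLast hne] using hmlast
    rwa [this]

namespace Disconnects

variable {X V1 V1' V2 W D : Set V}

theorem exists_mem_of_isChain (hD : Disconnects r V1 V2 D) {l : List V} (hne : l ≠ [])
    (hc : l.IsChain r) (hhead : l.head hne ∈ V1) (hlast : l.getLast hne ∈ V2) :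
    ∃ v ∈ D, v ∈ l := by
  obtain ⟨m, hm, hsub⟩ := exists_isPathFromTo_subset_of_isChain hne hc hhead hlast
  obtain ⟨v, hvD, hvm⟩ := hD m hm
  exact ⟨v, hvD, hsub hvm⟩

theorem mono_left (h : V1 ⊆ V1') (hD : Disconnects r V1' V2 D) : Disconnects r V1 V2 D :=
  fun l hl => hD l ⟨hl.1, fun hne => ⟨h (hl.2 hne).1, (hl.2 hne).2⟩⟩

theorem union_left (hD : Disconnects r X V2 D)
    (hW : ∀ w ∈ W, ∃ p, IsPathFromTo r X {w} p ∧ ∀ v ∈ D, v ∉ p) :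
    Disconnects r (W ∪ X) V2 D := by
  rintro (_ | ⟨a, t⟩) ⟨⟨hne, hnd, hc⟩, hends⟩
  · exact absurd rfl hne
  obtain ⟨haW | haX, hlast⟩ := hends hne
  · obtain ⟨p, ⟨⟨hpne, -, hpc⟩, hpends⟩, hpD⟩ := hW a haW
    obtain ⟨hpX, hpa⟩ := hpends hpne
    obtain ⟨p, rfl⟩ : ∃ p', p = p' ++ [a] :=
      List.getLast?_eq_some_iff.1 (by rw [List.getLast?_eq_some_getLast hpne, hpa])
    obtain ⟨v, hvD, hv⟩ := hD.exists_mem_of_isChain (l := p ++ [a] ++ t) (by simp)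
      (hpc.append_overlap hc (List.cons_ne_nil _ _)) (by rwa [List.head_append_left hpne])
      (by simpa using hlast)
    rcases List.mem_append.1 hv with hvp | hvt
    · exact absurd hvp (hpD v hvD)
    · exact ⟨v, hvD, List.mem_cons_of_mem a hvt⟩
  · exact hD _ ⟨⟨hne, hnd, hc⟩, fun _ => ⟨haX, hlast⟩⟩

end Disconnects

theorem injOn_getLast?_of_pairwise_disjoint {P : Set (List V)} (hP : P.Pairwise List.Disjoint) :
    P.InjOn List.getLast? := by
  intro p hp q hq hpq
  by_contra hne
  cases hlast : p.getLast? with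
  | none => exact hne ((List.getLast?_eq_none_iff.1 hlast).trans
      (List.getLast?_eq_none_iff.1 (hpq ▸ hlast)).symm)
  | some v => exact hP hp hq hne (List.mem_of_getLast? hlast) (List.mem_of_getLast? (hpq ▸ hlast))

section Counting

variable [Finite V] {X W D : Set V} {P : Finset (List V)}

theorem disjoint_and_forall_exists_getLast?_eq (hcard : P.card = D.ncard + W.ncard)
    (hP : ∀ p ∈ P, IsPathFromTo r X (W ∪ D) p) (hdisj : (P : Set (List V)).Pairwise List.Disjoint) :
    Disjoint D W ∧ ∀ v ∈ W ∪ D, ∃ p ∈ P, p.getLast? = some v := by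
  have hends : (List.getLast? '' (P : Set (List V))).ncard = W.ncard + D.ncard := by
    rw [(injOn_getLast?_of_pairwise_disjoint hdisj).ncard_image, Set.ncard_coe_finset, hcard,
      add_comm]
  have hsub : List.getLast? '' (P : Set (List V)) ⊆ some '' (W ∪ D) := by
    rintro _ ⟨p, hp, rfl⟩
    have hne := (hP p hp).1.1
    exact ⟨p.getLast hne, ((hP p hp).2 hne).2, (List.getLast?_eq_some_getLast hne).symm⟩
  have hsome : (some '' (W ∪ D)).ncard = (W ∪ D).ncard :=
    Set.ncard_image_of_injective _ (Option.some_injective V)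
  have heq : List.getLast? '' (P : Set (List V)) = some '' (W ∪ D) :=
    Set.eq_of_subset_of_ncard_le hsub (by rw [hsome, hends]; exact Set.ncard_union_le W D)
  refine ⟨((Set.ncard_union_eq_iff (Set.toFinite W) (Set.toFinite D)).1 ?_).symm, fun v hv => ?_⟩
  · rw [← hsome, ← heq, hends]
  · obtain ⟨p, hp, hpv⟩ := heq ▸ Set.mem_image_of_mem some hv
    exact ⟨p, hp, hpv⟩

theorem disjoint_and_forall_exists_isPathFromTo_avoiding (hcard : P.card = D.ncard + W.ncard)
    (hP : ∀ p ∈ P, IsPathFromTo r X (W ∪ D) p) (hdisj : (P : Set (List V)).Pairwise List.Disjoint) :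
    Disjoint D W ∧ ∀ w ∈ W, ∃ p, IsPathFromTo r X {w} p ∧ ∀ v ∈ D, v ∉ p := by
  obtain ⟨hDW, hends⟩ := disjoint_and_forall_exists_getLast?_eq hcard hP hdisj
  refine ⟨hDW, fun w hw => ?_⟩
  obtain ⟨p, hp, hpw⟩ := hends w (Or.inl hw)
  refine ⟨p, ⟨(hP p hp).1, fun hne => ⟨((hP p hp).2 hne).1, ?_⟩⟩, fun d hd hdp => ?_⟩
  · rw [List.getLast?_eq_some_getLast hne, Option.some_inj] at hpw
    exact hpw
  -- `d` ends another path of `P`, which is disjoint from `p`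
  obtain ⟨q, hq, hqd⟩ := hends d (Or.inr hd)
  have hpq : p ≠ q := by
    rintro rfl
    exact hDW.ne_of_mem hd hw (Option.some_injective V (hqd.symm.trans hpw))
  exact hdisj hp hq hpq hdp (List.mem_of_getLast? hqd)

end Counting

end

theorem stmt15 {V : Type*} [Fintype V] (r : V → V → Prop) (Xb Wb V2 D : Set V)
    (hb : ∃ P : Finset (List V), P.card = D.ncard + Wb.ncard ∧
      (∀ l ∈ P, IsPathFromTo r Xb (Wb ∪ D) l) ∧
      (∀ l₁ ∈ P, ∀ l₂ ∈ P, l₁ ≠ l₂ → ∀ v ∈ l₁, v ∉ l₂)) :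
    Disconnects r Xb V2 D ↔
      (Disconnects r (Wb ∪ Xb) V2 D ∧ D ∩ Wb = ∅) := by
  obtain ⟨P, hcard, hP, hdisj⟩ := hb
  obtain ⟨hDW, hWpaths⟩ := disjoint_and_forall_exists_isPathFromTo_avoiding hcard hP hdisj
  exact ⟨fun hD => ⟨hD.union_left hWpaths, Set.disjoint_iff_inter_eq_empty.1 hDW⟩,
    fun h => h.1.mono_left Set.subset_union_right⟩
end

section
/- Let F be a field and let W̄, W', D, X̄ be finite index types. Let T₁ : Matrix W̄ X̄ F, T₂ : Matrix W' X̄ F, T_D : Matrix D X̄ F, K : Matrix W' D F, and let T₃ be a row vector with columns X̄, and g₁, g₂ row vectors with columns W̄ and W' respectively. Assume T₂ = K · T_D and T₃ = g₁ · T₁ + g₂ · T₂. If M is any right inverse of the stacked matrix [T₁; T_D] (i.e. a matrix M with columns indexed by W̄ ⊕ D such that [T₁; T_D] · M = I), then g₁ = T₃ · M · E, where E is the (W̄ ⊕ D) × W̄ block matrix whose top block is the identity on W̄ and whose bottom block is zero. -/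
/-!
The non-target term `g₂ * T₂ = (g₂ * K) * T_D` factors through `T_D`, so `T₃` is the row vector
`[g₁, g₂ * K]` times the stacked matrix `[T₁; T_D]`. Multiplying by a right inverse `M` of
`[T₁; T_D]` recovers `[g₁, g₂ * K]`, and `E` selects its first block `g₁`.
-/

namespace Matrix

variable {R : Type*} [Semiring R] {l m n o p : Type*} [Fintype m] [Fintype n] [Fintype o]

theorem mul_mul_eq_of_mul_eq_one [DecidableEq m] {L : Matrix l m R} {A : Matrix m n R}
    {M : Matrix n m R} (hM : A * M = 1) : L * A * M = L := by
  rw [Matrix.mul_assoc, hM, Matrix.mul_one]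

theorem fromCols_mul_fromRows_one_zero [DecidableEq m] (A : Matrix l m R) (B : Matrix l o R) :
    fromCols A B * fromRows (1 : Matrix m m R) (0 : Matrix o m R) = A := by
  rw [fromCols_mul_fromRows, Matrix.mul_one, Matrix.mul_zero, add_zero]

theorem add_mul_mul_eq_fromCols_mul_fromRows (A : Matrix l m R) (B : Matrix m p R)
    (C : Matrix l n R) (K : Matrix n o R) (T : Matrix o p R) :
    A * B + C * (K * T) = fromCols A (C * K) * fromRows B T := by
  rw [fromCols_mul_fromRows, Matrix.mul_assoc]

end Matrix

/-- Matrix identity underlying the indirect identification formula: if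
`T₂ = K * T_D` and `T₃ = g₁ * T₁ + g₂ * T₂`, then for any right inverse `M`
of the stacked matrix `[T₁; T_D]` one has `g₁ = T₃ * M * E`, where `E` stacks
the identity on `W̄` on top of a zero block. -/
theorem stmt16 {F : Type*} [Field F] {Wb W' D Xb : Type*}
    [Fintype Wb] [Fintype W'] [Fintype D] [Fintype Xb]
    [DecidableEq Wb] [DecidableEq D]
    (T₁ : Matrix Wb Xb F) (T₂ : Matrix W' Xb F) (TD : Matrix D Xb F)
    (K : Matrix W' D F) (T₃ : Matrix Unit Xb F)
    (g₁ : Matrix Unit Wb F) (g₂ : Matrix Unit W' F)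
    (h1 : T₂ = K * TD)
    (h2 : T₃ = g₁ * T₁ + g₂ * T₂)
    (M : Matrix Xb (Wb ⊕ D) F)
    (hM : Matrix.fromRows T₁ TD * M = 1) :
    g₁ = T₃ * M * Matrix.fromRows (1 : Matrix Wb Wb F) (0 : Matrix D Wb F) := by
  rw [h2, h1, Matrix.add_mul_mul_eq_fromCols_mul_fromRows, Matrix.mul_mul_eq_of_mul_eq_one hM,
    Matrix.fromCols_mul_fromRows_one_zero]
end
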